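/- arXiv:2112.09781 — 6 statements merged into one kernel-verified Lean document; each statement's English description precedes it below -/
import Mathlib

section
/- Let J be a finite-dimensional real Jordan algebra. Then the bilinear form τ is associative: τ(x∘y, z) = τ(x, y∘z) for all x, y, z ∈ J; equivalently, tr(L_{(x∘y)∘z}) = tr(L_{x∘(y∘z)}). -/
/-!
Linearising the Jordan identity `[L a, L (a * a)] = 0` in `a` and evaluating it at a fourth
element `w`, then reading the result as an identity in `w`, expresses `L ((a * b) * c)` through
products of left multiplications:
`L ((a * b) * c) = L (b * c) L a + L (a * c) L b + L (a * b) L c - L b L c L a - L a L c L b`.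
Substituting `(a, b, c) ↦ (b, c, a)` gives the same kind of formula for
`L (a * (b * c)) = L ((b * c) * a)`, and the two right-hand sides have equal traces by
commutativity of the product and cyclicity of the trace.
-/

namespace IsCommJordan

variable {R A : Type*} [CommRing R] [NonUnitalNonAssocCommRing A] [IsCommJordan A]
  [Module R A] [SMulCommClass R A A]

open LinearMap (mulLeft)

theorem mulLeft_mul_mul [IsAddTorsionFree A] (a b c : A) :
    mulLeft R (a * b * c) = mulLeft R (b * c) * mulLeft R a + mulLeft R (a * c) * mulLeft R b
      + mulLeft R (a * b) * mulLeft R c - mulLeft R b * mulLeft R c * mulLeft R a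
      - mulLeft R a * mulLeft R c * mulLeft R b := by
  ext w
  have key : 2 • (w * (a * b * c) - a * b * (w * c) + (a * (b * w * c) - b * w * (a * c))
      + (b * (w * a * c) - w * a * (b * c))) = 0 :=
    congr($(two_nsmul_lie_lmul_lmul_add_add_eq_zero w a b) c)
  rw [← nsmul_zero 2, nsmul_right_inj two_ne_zero, mul_comm w (a * b * c), mul_comm w c,
    mul_comm w a, mul_comm (b * w) c, mul_comm (a * w) c, mul_comm (b * w) (a * c),
    mul_comm (a * w) (b * c)] at key
  change a * b * c * w = b * c * (a * w) + a * c * (b * w) + a * b * (c * w)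
    - b * (c * (a * w)) - a * (c * (b * w))
  rw [← sub_eq_zero, ← key]
  abel

theorem trace_mulLeft_mul_assoc [IsAddTorsionFree A] (a b c : A) :
    LinearMap.trace R A (mulLeft R (a * b * c)) =
      LinearMap.trace R A (mulLeft R (a * (b * c))) := by
  rw [mul_comm a (b * c), mulLeft_mul_mul a b c, mulLeft_mul_mul b c a]
  simp only [map_add, map_sub]
  rw [mul_comm c a, mul_comm b a, LinearMap.trace_mul_cycle (f := mulLeft R c),
    LinearMap.trace_mul_cycle (f := mulLeft R a)]
  abel

end IsCommJordan

abbrev LinearMap.toNonUnitalNonAssocCommRing {R M : Type*} [CommSemiring R] [AddCommGroup M]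
    [Module R M] (mul : M →ₗ[R] M →ₗ[R] M) (hcomm : ∀ x y, mul x y = mul y x) :
    NonUnitalNonAssocCommRing M where
  mul x y := mul x y
  left_distrib x y z := (mul x).map_add y z
  right_distrib x y z := mul.map_add₂ x y z
  zero_mul x := mul.map_zero₂ x
  mul_zero x := (mul x).map_zero
  mul_comm := hcomm

theorem stmt4_general (J : Type*) [AddCommGroup J] [Module ℝ J]
    (jmul : J →ₗ[ℝ] J →ₗ[ℝ] J)
    (hcomm : ∀ x y : J, jmul x y = jmul y x)
    (hjordan : ∀ x y : J, jmul (jmul x y) (jmul x x) = jmul x (jmul y (jmul x x))) :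
    ∀ x y z : J,
      LinearMap.trace ℝ J (jmul (jmul (jmul x y) z)) =
        LinearMap.trace ℝ J (jmul (jmul x (jmul y z))) := by
  let := jmul.toNonUnitalNonAssocCommRing hcomm
  have : IsCommJordan J := ⟨hjordan⟩
  have : SMulCommClass ℝ J J := ⟨fun r x y => ((jmul x).map_smul r y).symm⟩
  have : IsAddTorsionFree J := .of_isTorsionFree ℝ J
  exact IsCommJordan.trace_mulLeft_mul_assoc

/-- for a finite-dimensional real Jordan algebra, the trace form
`τ(x,y) = tr(L_{x∘y})` is associative: `τ(x∘y, z) = τ(x, y∘z)`. -/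
theorem stmt4 (J : Type*) [AddCommGroup J] [Module ℝ J] [FiniteDimensional ℝ J]
    (jmul : J →ₗ[ℝ] J →ₗ[ℝ] J)
    (hcomm : ∀ x y : J, jmul x y = jmul y x)
    (hjordan : ∀ x y : J, jmul (jmul x y) (jmul x x) = jmul x (jmul y (jmul x x))) :
    ∀ x y z : J,
      LinearMap.trace ℝ J (jmul (jmul (jmul x y) z)) =
        LinearMap.trace ℝ J (jmul (jmul x (jmul y z))) :=
  stmt4_general J jmul hcomm hjordan
end

section
/- Let J be a finite-dimensional, unital, positive real Jordan algebra and (c₁,…,c_r) a Jordan frame of J. Then J is the internal direct sum of the Peirce spaces J_{ij} for 1 ≤ i ≤ j ≤ r: every x ∈ J can be written uniquely as x = Σ_{1≤i≤j≤r} x_{ij} with x_{ij} ∈ J_{ij}. -/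
open Finset

section JordanPrelim

variable {J : Type*} [AddCommGroup J] [Module ℝ J]

/-- `c` is an idempotent: `c∘c = c`. -/
def IsIdem (jmul : J →ₗ[ℝ] J →ₗ[ℝ] J) (c : J) : Prop := jmul c c = c

/-- A nonzero idempotent is primitive if it is not the sum of two nonzero idempotents. -/
def IsPrimitive (jmul : J →ₗ[ℝ] J →ₗ[ℝ] J) (c : J) : Prop :=
  IsIdem jmul c ∧ c ≠ 0 ∧
    ¬ ∃ d e : J, IsIdem jmul d ∧ IsIdem jmul e ∧ d ≠ 0 ∧ e ≠ 0 ∧ c = d + e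

/-- `(c 1, …, c r)` is a Jordan frame: pairwise orthogonal primitive idempotents
summing to the unit. -/
def IsJordanFrame (jmul : J →ₗ[ℝ] J →ₗ[ℝ] J) (one : J) {r : ℕ} (c : Fin r → J) : Prop :=
  (∀ i, IsPrimitive jmul (c i)) ∧
  (∀ i j, i ≠ j → jmul (c i) (c j) = 0) ∧
  (∑ i, c i) = one

/-- The Peirce space `J_{ij} = {x | c_k ∘ x = ½(δ_{ki} + δ_{kj}) x for all k}`. -/
noncomputable def Peirce (jmul : J →ₗ[ℝ] J →ₗ[ℝ] J) {r : ℕ} (c : Fin r → J) (i j : Fin r) :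
    Submodule ℝ J :=
  ⨅ k : Fin r, LinearMap.ker
    (jmul (c k) -
      (((if k = i then (1 : ℝ) else 0) + (if k = j then 1 else 0)) / 2) • LinearMap.id)

/-- The trace form `τ(x,y) = tr L_{x∘y}`. -/
noncomputable def tauF (jmul : J →ₗ[ℝ] J →ₗ[ℝ] J) (x y : J) : ℝ :=
  LinearMap.trace ℝ J (jmul (jmul x y))

end JordanPrelim

/-! The operators `L k := jmul (c k)` pairwise commute (linearized Jordan identity, using
`c i ∘ c j = 0`) and satisfy `2 L³ = 3 L² - L` (the same identity, using `c k ∘ c k = c k`).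
In the commutative algebra they generate, Lagrange interpolation at `0, 1/2, 1` gives projectors
onto the eigenspaces of each `L k`, and their products project onto joint eigenspaces. Since
`∑ k, L k = L 1 = id`, the eigenvalues `μ k / 2` of a joint eigenvector sum to `1`; with
`μ k ∈ {0, 1, 2}` this forces `μ k = δ_{ki} + δ_{kj}` for a unique pair `i ≤ j`, so the joint
eigenspaces are exactly the Peirce spaces. -/

section PairWeight
variable {ι : Type*} [LinearOrder ι]

-- `pairWeight p k / 2` is the eigenvalue of multiplication by `c k` on the Peirce space `J_p`.
def pairWeight (p : {p : ι × ι // p.1 ≤ p.2}) (k : ι) : ℕ :=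
  (if k = p.1.1 then 1 else 0) + (if k = p.1.2 then 1 else 0)

lemma pairWeight_le_two (p : {p : ι × ι // p.1 ≤ p.2}) (k : ι) : pairWeight p k ≤ 2 := by
  unfold pairWeight; split_ifs <;> simp

lemma pairWeight_pos_iff {p : {p : ι × ι // p.1 ≤ p.2}} {k : ι} :
    0 < pairWeight p k ↔ k = p.1.1 ∨ k = p.1.2 := by
  unfold pairWeight; split_ifs <;> simp_all

lemma pairWeight_injective : Function.Injective (pairWeight (ι := ι)) := by
  rintro ⟨⟨i, j⟩, hij⟩ ⟨⟨i', j'⟩, hij'⟩ h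
  have hmem : ∀ k, (k = i ∨ k = j) ↔ (k = i' ∨ k = j') := fun k => by
    simpa only [pairWeight_pos_iff, eq_iff_iff] using congrArg (0 < · k) h
  ext <;> dsimp only <;> grind [hmem i, hmem j, hmem i', hmem j']

lemma exists_pairWeight_eq [Fintype ι] {μ : ι → ℕ} (hμ : ∑ k, μ k = 2) :
    ∃ p, pairWeight p = μ := by
  set m : Multiset ι := ∑ k, μ k • {k}
  have hcount : ∀ k, m.count k = μ k := by
    intro k
    simp [m, Multiset.count_sum', Multiset.count_singleton]
  have hcard : Multiset.card m = 2 := by simp [m, hμ]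
  obtain ⟨a, b, hab⟩ := Multiset.card_eq_two.1 hcard
  wlog h : a ≤ b generalizing a b
  · exact this b a (by rw [hab, Multiset.pair_comm]) (le_of_not_ge h)
  refine ⟨⟨(a, b), h⟩, funext fun k => ?_⟩
  rw [← hcount k, hab, pairWeight, Multiset.insert_eq_cons, Multiset.count_cons,
    Multiset.count_singleton, add_comm]

end PairWeight

section PeirceProjectors

variable {A : Type*} [CommRing A]

-- Lagrange interpolation at the nodes `0, 1/2, 1`, evaluated at `s`: for `a ≤ 2`,
-- `peirceProj s a` projects onto the `a/2`-eigenspace of `s`.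
def peirceProj (s : A) : ℕ → A
  | 0 => 1 - 3 * s + 2 * s ^ 2
  | 1 => 4 * s - 4 * s ^ 2
  | 2 => 2 * s ^ 2 - s
  | _ => 0

lemma sum_peirceProj (s : A) : ∑ a ∈ range 3, peirceProj s a = 1 := by
  simp only [sum_range_succ, sum_range_zero, peirceProj]
  ring

lemma two_mul_mul_peirceProj {s : A} (hs : 2 * s ^ 3 = 3 * s ^ 2 - s) (a : ℕ) :
    2 * s * peirceProj s a = a * peirceProj s a := by
  match a with
  | 0 => simp only [peirceProj]; push_cast; linear_combination 2 * hs
  | 1 => simp only [peirceProj]; push_cast; linear_combination -4 * hs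
  | 2 => simp only [peirceProj]; push_cast; linear_combination 2 * hs
  | _ + 3 => simp [peirceProj]

variable {ι : Type*} [Fintype ι] [DecidableEq ι]

def jointPeirceProj (t : ι → A) (μ : ι → ℕ) : A := ∏ k, peirceProj (t k) (μ k)

lemma sum_jointPeirceProj (t : ι → A) :
    ∑ μ ∈ Fintype.piFinset fun _ => range 3, jointPeirceProj t μ = 1 := by
  simp only [jointPeirceProj, ← prod_univ_sum, sum_peirceProj, prod_const_one]

lemma two_mul_mul_jointPeirceProj {t : ι → A} (ht : ∀ k, 2 * t k ^ 3 = 3 * t k ^ 2 - t k)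
    (μ : ι → ℕ) (k : ι) : 2 * t k * jointPeirceProj t μ = μ k * jointPeirceProj t μ := by
  rw [jointPeirceProj, ← mul_prod_erase _ _ (mem_univ k), ← mul_assoc,
    two_mul_mul_peirceProj (ht k), mul_assoc]

lemma jointPeirceProj_eq_zero (𝕜 : Type*) [Field 𝕜] [CharZero 𝕜] [Algebra 𝕜 A]
    {t : ι → A} (ht : ∀ k, 2 * t k ^ 3 = 3 * t k ^ 2 - t k) (hsum : ∑ k, t k = 1)
    {μ : ι → ℕ} (hμ : ∑ k, μ k ≠ 2) : jointPeirceProj t μ = 0 := by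
  have h : ((∑ k, μ k : ℕ) - 2 : 𝕜) • jointPeirceProj t μ = 0 := by
    calc ((∑ k, μ k : ℕ) - 2 : 𝕜) • jointPeirceProj t μ
        = ∑ k, (μ k : A) * jointPeirceProj t μ - 2 * (∑ k, t k) * jointPeirceProj t μ := by
          simp [hsum, Algebra.smul_def, sub_mul, sum_mul, map_ofNat]
      _ = 0 := by simp only [← two_mul_mul_jointPeirceProj ht, mul_sum, sum_mul, sub_self]
  refine (smul_eq_zero.1 h).resolve_left (sub_ne_zero.2 ?_)
  exact_mod_cast hμ

lemma mul_jointPeirceProj {𝕜 : Type*} [Field 𝕜] [CharZero 𝕜] [Algebra 𝕜 A]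
    {t : ι → A} (ht : ∀ k, 2 * t k ^ 3 = 3 * t k ^ 2 - t k) (μ : ι → ℕ) (k : ι) :
    t k * jointPeirceProj t μ = ((μ k : 𝕜) / 2) • jointPeirceProj t μ := by
  refine smul_right_injective A (two_ne_zero (α := 𝕜)) ?_
  dsimp only
  rw [smul_smul, mul_div_cancel₀ _ two_ne_zero, Nat.cast_smul_eq_nsmul, ofNat_smul_eq_nsmul,
    nsmul_eq_mul, nsmul_eq_mul, Nat.cast_ofNat, ← mul_assoc, two_mul_mul_jointPeirceProj ht]

end PeirceProjectors

section EigenDecomposition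

variable {𝕜 : Type*} [Field 𝕜] [CharZero 𝕜] {A : Type*} [CommRing A] [Algebra 𝕜 A]
  {M : Type*} [AddCommGroup M] [Module 𝕜 M] (φ : A →ₐ[𝕜] Module.End 𝕜 M) {ι : Type*}

lemma peirceProj_apply_of_eigen {s : A} {v : M} {b : ℕ} (hb : b ≤ 2)
    (hv : φ s v = ((b : 𝕜) / 2) • v) (a : ℕ) :
    φ (peirceProj s a) v = if a = b then v else 0 := by
  interval_cases b <;> rcases a with _ | _ | _ | a <;>
    simp [peirceProj, hv, pow_two, Module.End.mul_apply, map_ofNat] <;> module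

lemma prod_peirceProj_apply_of_eigen {t : ι → A} {v : M} {μ : ι → ℕ}
    (hμ : ∀ k, μ k ≤ 2) (hv : ∀ k, φ (t k) v = ((μ k : 𝕜) / 2) • v) (ν : ι → ℕ)
    (s : Finset ι) :
    φ (∏ k ∈ s, peirceProj (t k) (ν k)) v = if ∀ k ∈ s, ν k = μ k then v else 0 := by
  classical
  induction s using Finset.induction_on with
  | empty => simp
  | insert j s hj ih =>
    rw [prod_insert hj, map_mul, Module.End.mul_apply, ih]
    split_ifs with hs <;>
      simp_all [peirceProj_apply_of_eigen φ (hμ j) (hv j)]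

lemma jointPeirceProj_apply_of_eigen [Fintype ι] [DecidableEq ι] {t : ι → A} {v : M}
    {μ : ι → ℕ} (hμ : ∀ k, μ k ≤ 2) (hv : ∀ k, φ (t k) v = ((μ k : 𝕜) / 2) • v)
    (ν : ι → ℕ) : φ (jointPeirceProj t ν) v = if ν = μ then v else 0 := by
  simp [jointPeirceProj, prod_peirceProj_apply_of_eigen φ hμ hv, funext_iff]

end EigenDecomposition

lemma sum_jointPeirceProj_pairWeight (𝕜 : Type*) [Field 𝕜] [CharZero 𝕜] {A : Type*}
    [CommRing A] [Algebra 𝕜 A] {ι : Type*} [Fintype ι] [LinearOrder ι] {t : ι → A}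
    (ht : ∀ k, 2 * t k ^ 3 = 3 * t k ^ 2 - t k) (hsum : ∑ k, t k = 1) :
    ∑ p : {p : ι × ι // p.1 ≤ p.2}, jointPeirceProj t (pairWeight p) = 1 := by
  rw [← sum_jointPeirceProj t, ← sum_image fun p _ q _ h => pairWeight_injective h]
  refine sum_subset (fun μ hμ => ?_) fun μ _ hμ =>
    jointPeirceProj_eq_zero 𝕜 ht hsum fun h => ?_
  · obtain ⟨p, -, rfl⟩ := mem_image.1 hμ
    simpa [Nat.lt_succ_iff] using pairWeight_le_two p
  · obtain ⟨p, rfl⟩ := exists_pairWeight_eq h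
    exact hμ (mem_image_of_mem _ (mem_univ p))

open scoped IsMulCommutative in
theorem existsUnique_sum_pairWeight_eigenvectors {𝕜 : Type*} [Field 𝕜] [CharZero 𝕜]
    {M : Type*} [AddCommGroup M] [Module 𝕜 M] {ι : Type*} [Fintype ι] [LinearOrder ι]
    (T : ι → Module.End 𝕜 M) (hcomm : ∀ i j, Commute (T i) (T j))
    (hcubic : ∀ k, 2 * T k ^ 3 = 3 * T k ^ 2 - T k) (hsum : ∑ k, T k = 1) (x : M) :
    ∃! f : {p : ι × ι // p.1 ≤ p.2} → M,
      (∀ p k, T k (f p) = ((pairWeight p k : 𝕜) / 2) • f p) ∧ ∑ p, f p = x := by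
  let S := Algebra.adjoin 𝕜 (Set.range T)
  have : IsMulCommutative S := Algebra.isMulCommutative_adjoin 𝕜 <| by
    rintro _ ⟨i, rfl⟩ _ ⟨j, rfl⟩
    exact hcomm i j
  let t : ι → S := fun k => ⟨T k, Algebra.subset_adjoin ⟨k, rfl⟩⟩
  have ht : ∀ k, 2 * t k ^ 3 = 3 * t k ^ 2 - t k := fun k => Subtype.ext (hcubic k)
  have hts : ∑ k, t k = 1 := Subtype.ext (by simpa using hsum)
  have hQ := sum_jointPeirceProj_pairWeight 𝕜 ht hts
  refine ⟨fun p => S.val (jointPeirceProj t (pairWeight p)) x, ⟨fun p k => ?_, ?_⟩, ?_⟩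
  · have h := congrArg (S.val · x) (mul_jointPeirceProj (𝕜 := 𝕜) ht (pairWeight p) k)
    simp only [map_mul, Module.End.mul_apply, map_smul, LinearMap.smul_apply] at h
    exact h
  · rw [← LinearMap.sum_apply, ← map_sum, hQ, map_one, Module.End.one_apply]
  · rintro f ⟨hf, rfl⟩
    funext p
    have hQf q := jointPeirceProj_apply_of_eigen S.val (t := t) (pairWeight_le_two q) (hf q)
    simp only [map_sum, hQf, pairWeight_injective.eq_iff, sum_ite_eq, mem_univ, if_true]

section Jordan

variable {J : Type*} [AddCommGroup J] [Module ℝ J] {jmul : J →ₗ[ℝ] J →ₗ[ℝ] J}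

lemma jordan_linearized (hcomm : ∀ x y : J, jmul x y = jmul y x)
    (hjordan : ∀ x y : J, jmul (jmul x y) (jmul x x) = jmul x (jmul y (jmul x x)))
    (x z w : J) :
    (2 : ℝ) • (jmul x (jmul w (jmul x z)) - jmul (jmul x w) (jmul x z)) =
      jmul (jmul z w) (jmul x x) - jmul z (jmul w (jmul x x)) := by
  have h₁ := hjordan (x + z) w
  have h₂ := hjordan (x - z) w
  have h₃ := hjordan z w
  simp only [map_add, map_sub, LinearMap.add_apply, LinearMap.sub_apply, hcomm z x] at h₁ h₂
  linear_combination (norm := module) (-(1 / 2) : ℝ) • h₁ + (1 / 2 : ℝ) • h₂ + h₃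

lemma cubic_of_isIdem (hcomm : ∀ x y : J, jmul x y = jmul y x)
    (hjordan : ∀ x y : J, jmul (jmul x y) (jmul x x) = jmul x (jmul y (jmul x x)))
    {c : J} (hc : IsIdem jmul c) :
    2 * jmul c ^ 3 = 3 * jmul c ^ 2 - jmul c := by
  ext w
  have h := jordan_linearized hcomm hjordan c w c
  unfold IsIdem at hc
  simp only [hc, hcomm w c, hcomm (jmul c w) c] at h
  simp only [pow_succ, pow_zero, one_mul, LinearMap.sub_apply, Module.End.mul_apply,
    Module.End.ofNat_apply]
  linear_combination (norm := module) h

lemma commute_of_isIdem_of_mul_eq_zero (hcomm : ∀ x y : J, jmul x y = jmul y x)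
    (hjordan : ∀ x y : J, jmul (jmul x y) (jmul x x) = jmul x (jmul y (jmul x x)))
    {c d : J} (hc : IsIdem jmul c) (hcd : jmul c d = 0) :
    Commute (jmul c) (jmul d) := by
  ext w
  have h := jordan_linearized hcomm hjordan c d w
  rw [hcd, hc] at h
  simp only [map_zero, sub_zero, smul_zero] at h
  rw [Module.End.mul_apply, Module.End.mul_apply, hcomm c (jmul d w), hcomm c w]
  exact sub_eq_zero.1 h.symm

end Jordan

lemma mem_Peirce_iff {J : Type*} [AddCommGroup J] [Module ℝ J]
    (jmul : J →ₗ[ℝ] J →ₗ[ℝ] J) {r : ℕ} (c : Fin r → J)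
    (p : {p : Fin r × Fin r // p.1 ≤ p.2}) (x : J) :
    x ∈ Peirce jmul c p.1.1 p.1.2 ↔
      ∀ k, jmul (c k) x = ((pairWeight p k : ℝ) / 2) • x := by
  simp [Peirce, Submodule.mem_iInf, sub_eq_zero, pairWeight]

theorem stmt5_general (J : Type*) [AddCommGroup J] [Module ℝ J]
    (jmul : J →ₗ[ℝ] J →ₗ[ℝ] J)
    (hcomm : ∀ x y : J, jmul x y = jmul y x)
    (hjordan : ∀ x y : J, jmul (jmul x y) (jmul x x) = jmul x (jmul y (jmul x x)))
    (one : J) (hone : ∀ x : J, jmul one x = x)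
    (r : ℕ) (c : Fin r → J) (hframe : IsJordanFrame jmul one c) :
    ∀ x : J, ∃! f : {p : Fin r × Fin r // p.1 ≤ p.2} → J,
      (∀ p, f p ∈ Peirce jmul c p.1.1 p.1.2) ∧ (∑ p, f p) = x := by
  obtain ⟨hprim, horth, hsum⟩ := hframe
  have hcommute : ∀ i j, Commute (jmul (c i)) (jmul (c j)) := fun i j => by
    rcases eq_or_ne i j with rfl | hij
    · exact Commute.refl _
    · exact commute_of_isIdem_of_mul_eq_zero hcomm hjordan (hprim i).1 (horth i j hij)
  have hunit : ∑ k, jmul (c k) = 1 := by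
    rw [← map_sum, hsum]
    exact LinearMap.ext hone
  intro x
  simpa only [mem_Peirce_iff] using existsUnique_sum_pairWeight_eigenvectors (fun k => jmul (c k))
    hcommute (fun k => cubic_of_isIdem hcomm hjordan (hprim k).1) hunit x

/-- a finite-dimensional, unital, positive real Jordan algebra is the
internal direct sum of the Peirce spaces `J_{ij}`, `i ≤ j`, of any Jordan frame:
every `x` is uniquely a sum of components `x_{ij} ∈ J_{ij}`. -/
theorem stmt5 (J : Type*) [AddCommGroup J] [Module ℝ J] [FiniteDimensional ℝ J]
    (jmul : J →ₗ[ℝ] J →ₗ[ℝ] J)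
    (hcomm : ∀ x y : J, jmul x y = jmul y x)
    (hjordan : ∀ x y : J, jmul (jmul x y) (jmul x x) = jmul x (jmul y (jmul x x)))
    (one : J) (hone : ∀ x : J, jmul one x = x)
    (hpos : ∀ x : J, x ≠ 0 → 0 < tauF jmul x x)
    (r : ℕ) (c : Fin r → J) (hframe : IsJordanFrame jmul one c) :
    ∀ x : J, ∃! f : {p : Fin r × Fin r // p.1 ≤ p.2} → J,
      (∀ p, f p ∈ Peirce jmul c p.1.1 p.1.2) ∧ (∑ p, f p) = x :=
  stmt5_general J jmul hcomm hjordan one hone r c hframe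
end

section
/- Let J be a finite-dimensional, unital, positive real Jordan algebra and (c₁,…,c_r) a Jordan frame of J. Then for each i, the Peirce space J_{ii} is one-dimensional and equals the span of c_i: J_{ii} = ℝ·c_i. -/
open Finset

/-!
Let `x ∈ J_{ii}`, so `c_i ∘ x = x`. The Jordan identity makes the powers of `x`, taken with
`c_i` as zeroth power, associate, so `f ↦ f(x)` is a multiplicative map `ℝ[X] → J` whose kernel
`I` is a nonzero ideal (`J` is finite-dimensional). Positivity of the trace form makes `I`
real: `f² + g² ∈ I` forces `g ∈ I`; primitivity of `c_i` means `ℝ[X]/I` has no nontrivial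
idempotents. Hence `I` contains an irreducible polynomial `q`, of degree at most two; if `q`
were quadratic without real root, completing the square would put a nonzero constant in `I`.
So `X - a ∈ I` for some `a`, i.e. `x = a c_i`.
-/

open Polynomial

theorem Ideal.exists_irreducible_mem {R : Type*} [CommRing R] [IsDomain R]
    [IsPrincipalIdealRing R] (I : Ideal R) (hbot : I ≠ ⊥) (htop : I ≠ ⊤)
    (hsq : ∀ f, f ^ 2 ∈ I → f ∈ I) (hidem : ∀ f, f * (1 - f) ∈ I → f ∈ I ∨ 1 - f ∈ I) :
    ∃ q, Irreducible q ∧ q ∈ I := by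
  obtain ⟨p, rfl⟩ : ∃ p, I = Ideal.span {p} :=
    ⟨_, (Submodule.IsPrincipal.span_singleton_generator I).symm⟩
  simp only [Ideal.mem_span_singleton] at hsq hidem ⊢
  have hp0 : p ≠ 0 := by simpa using hbot
  obtain ⟨q, hq, t, rfl⟩ :=
    WfDvdMonoid.exists_irreducible_factor (by simpa using htop) hp0
  have hqt : IsCoprime q t := by
    refine hq.coprime_iff_not_dvd.mpr ?_
    rintro ⟨s, rfl⟩
    -- `(q s)² = (q q s) s`, so `q q s ∣ q s`, forcing `q` to be a unit
    have hsq' : q * (q * s) ∣ 1 * (q * s) := by simpa using hsq (q * s) ⟨s, by ring⟩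
    rw [mul_dvd_mul_iff_right (right_ne_zero_of_mul hp0)] at hsq'
    exact hq.not_isUnit (isUnit_of_dvd_one hsq')
  obtain ⟨a, b, hab⟩ := hqt
  have h1 : 1 - a * q = b * t := by rw [← hab]; ring
  rcases hidem (a * q) ⟨a * b, by rw [h1]; ring⟩ with h | h
  · have ht : IsUnit t := isUnit_of_dvd_one <| by
      rw [← hab]; exact dvd_add ((dvd_mul_left t q).trans h) (dvd_mul_left t b)
    exact ⟨q, hq, ht.mul_right_dvd.mpr dvd_rfl⟩
  · rw [h1] at h
    refine absurd (isUnit_of_dvd_one ?_) hq.not_isUnit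
    rw [← hab]
    exact dvd_add (dvd_mul_left q a) ((dvd_mul_right q t).trans h)

theorem Polynomial.exists_isRoot_of_natDegree_eq_two_of_mem {I : Ideal ℝ[X]} (htop : I ≠ ⊤)
    (hreal : ∀ f g : ℝ[X], f ^ 2 + g ^ 2 ∈ I → g ∈ I) {q : ℝ[X]} (hqI : q ∈ I)
    (hq : q.natDegree = 2) : ∃ a, q.IsRoot a := by
  set α := q.coeff 2
  set β := q.coeff 1
  set γ := q.coeff 0
  have hα : α ≠ 0 := by
    have : q.leadingCoeff ≠ 0 := leadingCoeff_ne_zero.mpr (ne_zero_of_natDegree_gt (hq ▸ two_pos))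
    rwa [leadingCoeff, hq] at this
  have hqeq := eq_quadratic_of_degree_le_two (natDegree_le_iff_degree_le.mp hq.le)
  by_contra! hroot
  have hd : discrim α β γ < 0 := by
    by_contra! hd
    obtain ⟨a, ha⟩ := exists_quadratic_eq_zero hα ⟨_, (Real.mul_self_sqrt hd).symm⟩
    refine hroot a ?_
    rw [hqeq]
    simp only [IsRoot, eval_add, eval_mul, eval_C, eval_pow, eval_X]
    linear_combination ha
  have hsquares : (C (2 * α) * X + C β) ^ 2 + C √(-discrim α β γ) ^ 2 = C (4 * α) * q := by
    rw [← C_pow, Real.sq_sqrt (by linarith), hqeq]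
    simp only [discrim, map_mul, map_neg, map_sub, map_pow, map_ofNat]
    ring
  have hunit : IsUnit (C √(-discrim α β γ)) :=
    isUnit_C.mpr (IsUnit.mk0 _ (Real.sqrt_ne_zero'.mpr (by linarith)))
  exact htop (I.eq_top_of_isUnit_mem (hreal _ _ (hsquares ▸ I.mul_mem_left _ hqI)) hunit)

theorem Polynomial.exists_X_sub_C_mem_of_irreducible_mem {I : Ideal ℝ[X]} (htop : I ≠ ⊤)
    (hreal : ∀ f g : ℝ[X], f ^ 2 + g ^ 2 ∈ I → g ∈ I) {q : ℝ[X]} (hq : Irreducible q)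
    (hqI : q ∈ I) : ∃ a, X - C a ∈ I := by
  obtain ⟨a, ha⟩ : ∃ a, q.IsRoot a := by
    rcases (show q.natDegree = 1 ∨ q.natDegree = 2 by
      have := hq.natDegree_pos; have := hq.natDegree_le_two; omega) with h | h
    · exact exists_root_of_degree_eq_one (degree_eq_iff_natDegree_eq_of_pos one_pos |>.mpr h)
    · exact exists_isRoot_of_natDegree_eq_two_of_mem htop hreal hqI h
  have hdvd : q ∣ X - C a := (irreducible_X_sub_C a).dvd_symm hq (dvd_iff_isRoot.mpr ha)
  exact ⟨a, I.mem_of_dvd hdvd hqI⟩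

section Jordan

variable {J : Type*} [AddCommGroup J] [Module ℝ J]

structure IsJordanProduct (jmul : J →ₗ[ℝ] J →ₗ[ℝ] J) : Prop where
  comm : ∀ x y, jmul x y = jmul y x
  jordan : ∀ x y, jmul (jmul x y) (jmul x x) = jmul x (jmul y (jmul x x))

variable {jmul : J →ₗ[ℝ] J →ₗ[ℝ] J}

namespace IsJordanProduct

variable (hJ : IsJordanProduct jmul)
include hJ

theorem jmul_sq_jmul (x y : J) : jmul (jmul x x) (jmul x y) = jmul x (jmul (jmul x x) y) := by
  have h := hJ.jordan x y
  rwa [hJ.comm (jmul x y), hJ.comm y] at h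

theorem jmul_sq_jmul_linearized (x z y : J) :
    jmul (jmul x x) (jmul z y) + (2 : ℝ) • jmul (jmul x z) (jmul x y) =
      jmul z (jmul (jmul x x) y) + (2 : ℝ) • jmul x (jmul (jmul x z) y) := by
  have hA := hJ.jmul_sq_jmul (x + z) y
  have hB := hJ.jmul_sq_jmul (x - z) y
  have hz := hJ.jmul_sq_jmul z y
  simp only [map_add, map_sub, LinearMap.add_apply, LinearMap.sub_apply, hJ.comm z x] at hA hB
  linear_combination (norm := module) (1 / 2 : ℝ) • hA - (1 / 2 : ℝ) • hB - hz

theorem jmul_jmul_cyclic (u v w y : J) :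
    jmul (jmul u w) (jmul v y) + jmul (jmul u v) (jmul w y) + jmul (jmul v w) (jmul u y) =
      jmul v (jmul (jmul u w) y) + jmul u (jmul (jmul v w) y) + jmul w (jmul (jmul u v) y) := by
  have hA := hJ.jmul_sq_jmul_linearized (u + w) v y
  have hu := hJ.jmul_sq_jmul_linearized u v y
  have hw := hJ.jmul_sq_jmul_linearized w v y
  simp only [map_add, LinearMap.add_apply, hJ.comm w u, hJ.comm w v] at hA hu hw ⊢
  linear_combination (norm := module) (1 / 2 : ℝ) • hA - (1 / 2 : ℝ) • hu - (1 / 2 : ℝ) • hw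

theorem jmul_jmul_comm_of_jmul_eq_self {e z : J} (he : IsIdem jmul e) (hz : jmul e z = z)
    (y : J) : jmul e (jmul z y) = jmul z (jmul e y) := by
  have h := hJ.jmul_sq_jmul_linearized e z y
  rw [he, hz] at h
  linear_combination (norm := module) -h

end IsJordanProduct

end Jordan

section RelPow

variable {J : Type*} [AddCommGroup J] [Module ℝ J] {jmul : J →ₗ[ℝ] J →ₗ[ℝ] J}

variable (jmul) in
def relPow (e x : J) (n : ℕ) : J := (jmul x)^[n] e

@[simp]
theorem relPow_zero (e x : J) : relPow jmul e x 0 = e := rfl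

theorem relPow_succ (e x : J) (n : ℕ) : relPow jmul e x (n + 1) = jmul x (relPow jmul e x n) :=
  Function.iterate_succ_apply' _ _ _

variable (jmul) in
noncomputable def relAeval (e x : J) : ℝ[X] →ₗ[ℝ] J :=
  lsum fun n => LinearMap.toSpanSingleton ℝ J (relPow jmul e x n)

theorem relAeval_monomial (e x : J) (n : ℕ) (a : ℝ) :
    relAeval jmul e x (monomial n a) = a • relPow jmul e x n := by
  simp [relAeval]

theorem relAeval_C (e x : J) (a : ℝ) : relAeval jmul e x (C a) = a • e := by
  rw [← monomial_zero_left, relAeval_monomial, relPow_zero]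

variable (hJ : IsJordanProduct jmul) {e x : J} (he : IsIdem jmul e) (hx : jmul e x = x)
include hJ hx

theorem relPow_one : relPow jmul e x 1 = x := by
  rw [relPow_succ, relPow_zero, hJ.comm, hx]

include he in
theorem jmul_relPow (n : ℕ) : jmul e (relPow jmul e x n) = relPow jmul e x n := by
  induction n with
  | zero => exact he
  | succ n ih => rw [relPow_succ, hJ.jmul_jmul_comm_of_jmul_eq_self he hx, ih]

include he in
/-- The commutators `D a = [L (xᵃ), L (x^(N-a))]` satisfy `D (a+1) = D a + D 1` by the
linearized Jordan identity, and `D 0 = D N = 0`, so `N • D 1 = 0`. -/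
theorem relPow_jmul_comm {N : ℕ}
    (hmul : ∀ a b, a + b + 1 = N → jmul (relPow jmul e x a) (relPow jmul e x b) =
      relPow jmul e x (a + b)) (a : ℕ) (ha : a ≤ N) (y : J) :
    jmul (relPow jmul e x a) (jmul (relPow jmul e x (N - a)) y) =
      jmul (relPow jmul e x (N - a)) (jmul (relPow jmul e x a) y) := by
  set P := relPow jmul e x with hP
  set D : ℕ → J := fun a => jmul (P a) (jmul (P (N - a)) y) - jmul (P (N - a)) (jmul (P a) y)
  have hD0 : D 0 = 0 := by
    simp only [D, P, relPow_zero, Nat.sub_zero]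
    rw [hJ.jmul_jmul_comm_of_jmul_eq_self he (jmul_relPow hJ he hx N), sub_self]
  have hDN : D N = 0 := by
    simp only [D, P, relPow_zero, Nat.sub_self]
    rw [hJ.jmul_jmul_comm_of_jmul_eq_self he (jmul_relPow hJ he hx N), sub_self]
  have hstep : ∀ a, a < N → D (a + 1) = D a + D 1 := by
    intro a ha
    have h := hJ.jmul_jmul_cyclic (P (N - (a + 1))) (P a) x y
    rw [hJ.comm _ x, ← relPow_succ, show N - (a + 1) + 1 = N - a by omega,
      hmul _ _ (by omega), show N - (a + 1) + a = N - 1 by omega, hJ.comm _ x,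
      ← relPow_succ, ← hP] at h
    simp only [D, show P 1 = x from relPow_one hJ hx]
    linear_combination (norm := module) h
  have hlin : ∀ a, a ≤ N → D a = (a : ℝ) • D 1 := by
    intro a ha
    induction a with
    | zero => simp [hD0]
    | succ a ih => rw [hstep a ha, ih (by omega)]; push_cast; module
  rcases N.eq_zero_or_pos with rfl | hN
  · obtain rfl : a = 0 := by omega
    exact sub_eq_zero.mp hD0
  have hD1 : D 1 = 0 := by
    have h := hlin N le_rfl
    rw [hDN, eq_comm, smul_eq_zero] at h
    exact h.resolve_left (by positivity)
  exact sub_eq_zero.mp ((hlin a ha).trans (by rw [hD1, smul_zero]))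

include he in
theorem relPow_mul_relPow (a b : ℕ) :
    jmul (relPow jmul e x a) (relPow jmul e x b) = relPow jmul e x (a + b) := by
  induction h : a + b using Nat.strong_induction_on generalizing a b with
  | _ N ih =>
  cases b with
  | zero => rw [relPow_zero, hJ.comm, jmul_relPow hJ he hx, ← h, add_zero]
  | succ b =>
    have hcomm := relPow_jmul_comm hJ he hx (N := a + 1)
      (fun a' b' h' => ih _ (by omega) a' b' rfl) a (by omega) (relPow jmul e x b)
    rw [show a + 1 - a = 1 by omega, relPow_one hJ hx] at hcomm
    rw [relPow_succ, hcomm, ih (a + b) (by omega) a b rfl, ← relPow_succ, ← h, add_assoc]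

theorem relAeval_X : relAeval jmul e x X = x := by
  rw [← monomial_one_one_eq_X, relAeval_monomial, one_smul, relPow_one hJ hx]

include he in
theorem relAeval_mul (f g : ℝ[X]) :
    relAeval jmul e x (f * g) = jmul (relAeval jmul e x f) (relAeval jmul e x g) := by
  induction f using Polynomial.induction_on' with
  | add f₁ f₂ h₁ h₂ => rw [add_mul, map_add, map_add, h₁, h₂, map_add, LinearMap.add_apply]
  | monomial m a =>
    induction g using Polynomial.induction_on' with
    | add g₁ g₂ h₁ h₂ => rw [mul_add, map_add, map_add, h₁, h₂, map_add]
    | monomial n b =>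
      simp only [monomial_mul_monomial, relAeval_monomial, map_smul, LinearMap.smul_apply,
        relPow_mul_relPow hJ he hx, smul_smul, mul_comm b a]

end RelPow

section Peirce

variable {J : Type*} [AddCommGroup J] [Module ℝ J] {jmul : J →ₗ[ℝ] J →ₗ[ℝ] J}

theorem eq_zero_of_jmul_self_add_jmul_self_eq_zero (hpos : ∀ x : J, x ≠ 0 → 0 < tauF jmul x x)
    {u v : J} (h : jmul u u + jmul v v = 0) : v = 0 := by
  have hnonneg : 0 ≤ tauF jmul u u := by
    rcases eq_or_ne u 0 with rfl | hu
    · simp [tauF]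
    · exact (hpos u hu).le
  have hsum : tauF jmul u u + tauF jmul v v = 0 := by simp only [tauF, ← map_add, h, map_zero]
  by_contra hv
  linarith [hpos v hv]

theorem relAeval_ker_ne_bot [FiniteDimensional ℝ J] (e x : J) :
    LinearMap.ker (relAeval jmul e x) ≠ ⊥ := fun h =>
  Polynomial.not_finite (FiniteDimensional.of_injective _ (LinearMap.ker_eq_bot.mp h))

theorem IsPrimitive.relAeval_eq_zero_or_of_mul_one_sub (hJ : IsJordanProduct jmul) {e x : J}
    (he : IsPrimitive jmul e) (hx : jmul e x = x) {f : ℝ[X]}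
    (hf : relAeval jmul e x (f * (1 - f)) = 0) :
    relAeval jmul e x f = 0 ∨ relAeval jmul e x (1 - f) = 0 := by
  have hidem : ∀ g, g * g = g - f * (1 - f) → IsIdem jmul (relAeval jmul e x g) := by
    intro g hg
    rw [IsIdem, ← relAeval_mul hJ he.1 hx, hg, map_sub, hf, sub_zero]
  have hsum : e = relAeval jmul e x f + relAeval jmul e x (1 - f) := by
    rw [← map_add, add_sub_cancel, ← C_1, relAeval_C, one_smul]
  by_contra! hne
  exact he.2.2 ⟨_, _, hidem f (by ring), hidem (1 - f) (by ring), hne.1, hne.2, hsum⟩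

theorem IsPrimitive.mem_span_of_jmul_eq_self [FiniteDimensional ℝ J] (hJ : IsJordanProduct jmul)
    (hreal : ∀ u v : J, jmul u u + jmul v v = 0 → v = 0) {e x : J} (he : IsPrimitive jmul e)
    (hx : jmul e x = x) : x ∈ ℝ ∙ e := by
  have hmul := relAeval_mul hJ he.1 hx
  let I : Ideal ℝ[X] :=
    { carrier := LinearMap.ker (relAeval jmul e x)
      add_mem' := add_mem
      zero_mem' := zero_mem _
      smul_mem' := fun g f (hf : relAeval jmul e x f = 0) =>
        show relAeval jmul e x (g * f) = 0 by rw [hmul, hf, map_zero] }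
  have hI : ∀ f, f ∈ I ↔ relAeval jmul e x f = 0 := fun _ => Iff.rfl
  have hbot : I ≠ ⊥ := fun h => relAeval_ker_ne_bot e x <| by
    ext f; exact SetLike.ext_iff.mp h f
  have htop : I ≠ ⊤ := fun h => he.2.1 <| by
    have h1 : relAeval jmul e x (C 1) = 0 := (I.eq_top_iff_one.mp h :)
    rwa [relAeval_C, one_smul] at h1
  have hreal' : ∀ f g, f ^ 2 + g ^ 2 ∈ I → g ∈ I := fun f g h => by
    rw [hI, map_add, sq, sq, hmul, hmul] at h
    exact hreal _ _ h
  obtain ⟨q, hq, hqI⟩ := I.exists_irreducible_mem hbot htop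
    (fun g hg => hreal' 0 g (by simpa using hg))
    (fun f hf => he.relAeval_eq_zero_or_of_mul_one_sub hJ hx hf)
  obtain ⟨a, ha⟩ := exists_X_sub_C_mem_of_irreducible_mem htop hreal' hq hqI
  rw [hI, map_sub, relAeval_X hJ hx, relAeval_C, sub_eq_zero] at ha
  exact Submodule.mem_span_singleton.mpr ⟨a, ha.symm⟩

theorem mem_Peirce_self_iff {r : ℕ} {c : Fin r → J} {i : Fin r} {x : J} :
    x ∈ Peirce jmul c i i ↔ ∀ k, jmul (c k) x = if k = i then x else 0 := by
  simp only [Peirce, Submodule.mem_iInf, LinearMap.mem_ker, LinearMap.sub_apply,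
    LinearMap.smul_apply, LinearMap.id_apply, sub_eq_zero]
  refine forall_congr' fun k => ?_
  split_ifs <;> norm_num

end Peirce

theorem stmt7_general (J : Type*) [AddCommGroup J] [Module ℝ J] [FiniteDimensional ℝ J]
    (jmul : J →ₗ[ℝ] J →ₗ[ℝ] J)
    (hcomm : ∀ x y : J, jmul x y = jmul y x)
    (hjordan : ∀ x y : J, jmul (jmul x y) (jmul x x) = jmul x (jmul y (jmul x x)))
    (one : J)
    (hpos : ∀ x : J, x ≠ 0 → 0 < tauF jmul x x)
    (r : ℕ) (c : Fin r → J) (hframe : IsJordanFrame jmul one c) (i : Fin r) :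
    Peirce jmul c i i = Submodule.span ℝ {c i} := by
  obtain ⟨hprim, horth, -⟩ := hframe
  apply le_antisymm
  · intro x hx
    have hcx : jmul (c i) x = x := by simpa using mem_Peirce_self_iff.mp hx i
    exact (hprim i).mem_span_of_jmul_eq_self ⟨hcomm, hjordan⟩
      (fun _ _ => eq_zero_of_jmul_self_add_jmul_self_eq_zero hpos) hcx
  · rw [Submodule.span_le, Set.singleton_subset_iff, SetLike.mem_coe, mem_Peirce_self_iff]
    intro k
    split_ifs with hk
    · exact hk ▸ (hprim i).1
    · exact horth k i hk

/-- in a finite-dimensional, unital, positive real Jordan algebra,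
the diagonal Peirce spaces of a Jordan frame are one-dimensional: `J_{ii} = ℝ·c_i`. -/
theorem stmt7 (J : Type*) [AddCommGroup J] [Module ℝ J] [FiniteDimensional ℝ J]
    (jmul : J →ₗ[ℝ] J →ₗ[ℝ] J)
    (hcomm : ∀ x y : J, jmul x y = jmul y x)
    (hjordan : ∀ x y : J, jmul (jmul x y) (jmul x x) = jmul x (jmul y (jmul x x)))
    (one : J) (hone : ∀ x : J, jmul one x = x)
    (hpos : ∀ x : J, x ≠ 0 → 0 < tauF jmul x x)
    (r : ℕ) (c : Fin r → J) (hframe : IsJordanFrame jmul one c) (i : Fin r) :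
    Peirce jmul c i i = Submodule.span ℝ {c i} :=
  stmt7_general J jmul hcomm hjordan one hpos r c hframe i
end

section
/- Let J be a finite-dimensional, unital, positive real Jordan algebra, (c₁,…,c_r) a Jordan frame, λ₁,…,λ_r ∈ ℝ, and x = Σ_{i=1}^r λ_i c_i. Then the image of the multiplication operator L_x equals the sum of the Peirce spaces indexed by pairs whose coefficients do not sum to zero: L_x(J) = Σ_{1≤i≤j≤r, λ_i+λ_j≠0} J_{ij}. -/
open Finset

/-!
The multiplication operators `L_{c_k}` of a Jordan frame pairwise commute, and each satisfies
`L(L - 1)(2L - 1) = 0`; both facts come from the linearized Jordan identity. Hence they are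
simultaneously diagonalizable, with joint eigenvalues in `{0, 1/2, 1}` summing to `1` because
`∑ c_k = 1`. Such a joint eigenvalue vector is `(δ_{ki} + δ_{kj})/2` for some `i ≤ j`, so `J` is the
sum of the Peirce spaces `J_{ij}`. Finally `L_x` acts on `J_{ij}` as the scalar `(λ_i + λ_j)/2`,
so it maps `J_{ij}` onto itself or to `0`.
-/

open Module End Polynomial

section LinearAlgebra

variable {K V : Type*} [Field K] [AddCommGroup V] [Module K V]

theorem Submodule.map_eq_iSup_of_forall_apply_eq_smul {p : Submodule K V} {f : End K V} {a : K}
    (h : ∀ z ∈ p, f z = a • z) : p.map f = ⨆ (_ : a ≠ 0), p := by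
  have hf : f.domRestrict p = (a • LinearMap.id : End K V).domRestrict p :=
    LinearMap.ext fun z ↦ h z z.2
  rw [← LinearMap.range_domRestrict, hf, LinearMap.range_domRestrict, Submodule.map_smul',
    Submodule.map_id]

namespace Module.End

theorem sum_smul_apply_of_mem_iInf_eigenspace {ι : Type*} [Fintype ι] {f : ι → End K V}
    {χ : ι → K} {z : V} (hz : z ∈ ⨅ k, (f k).eigenspace (χ k)) (a : ι → K) :
    (∑ k, a k • f k) z = (∑ k, a k * χ k) • z := by
  have hz' : ∀ k, f k z = χ k • z := fun k ↦ mem_eigenspace_iff.mp ((Submodule.mem_iInf _).mp hz k)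
  simp only [LinearMap.sum_apply, LinearMap.smul_apply, hz', smul_smul, Finset.sum_smul]

theorem iSup_iInf_eigenspace_eq_top_of_commute [FiniteDimensional K V] {ι : Type*}
    (f : ι → End K V) (hcomm : Pairwise fun i j ↦ Commute (f i) (f j))
    (hss : ∀ i, (f i).IsFinitelySemisimple) (htop : ∀ i, ⨆ μ, (f i).eigenspace μ = ⊤) :
    ⨆ χ : ι → K, ⨅ i, (f i).eigenspace (χ i) = ⊤ := by
  simpa only [(hss _).maxGenEigenspace_eq_eigenspace] using
    iSup_iInf_maxGenEigenspace_eq_top_of_iSup_maxGenEigenspace_eq_top_of_commute f hcomm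
      fun i ↦ by simpa only [(hss i).maxGenEigenspace_eq_eigenspace] using htop i

variable [NeZero (2 : K)] {g : End K V}

theorem aeval_eq_zero_of_cubic_eq_zero (hg : g * (g - 1) * (2 * g - 1) = 0) :
    aeval g ((X - C 0) * (X - C 1) * (X - C 2⁻¹) : K[X]) = 0 := by
  have h : aeval g ((X - C 0) * (X - C 1) * (X - C 2⁻¹) : K[X]) =
      (2⁻¹ : K) • (g * (g - 1) * (2 * g - 1)) := by
    simp only [map_mul, map_sub, map_zero, map_one, sub_zero, aeval_X, aeval_C,
      Algebra.algebraMap_eq_smul_one, two_mul, mul_sub, sub_mul, mul_add, mul_smul_comm, mul_one,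
      smul_sub, smul_add]
    match_scalars <;> field_simp <;> ring
  rw [h, hg, smul_zero]

theorem isSemisimple_of_cubic_eq_zero (hg : g * (g - 1) * (2 * g - 1) = 0) : g.IsSemisimple := by
  have hcop : ∀ a b : K, a ≠ b → IsCoprime (X - C a) (X - C b) := fun a b hab ↦
    isCoprime_X_sub_C_of_isUnit_sub (sub_ne_zero.mpr hab).isUnit
  have hsep : ((X - C 0) * (X - C 1) * (X - C 2⁻¹) : K[X]).Separable := by
    refine (separable_X_sub_C.mul separable_X_sub_C (hcop _ _ zero_ne_one)).mul separable_X_sub_C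
      ((hcop _ _ (inv_ne_zero two_ne_zero).symm).mul_left (hcop _ _ ?_))
    rw [ne_eq, eq_comm, inv_eq_one]
    exact fun h ↦ one_ne_zero (by linear_combination h)
  exact isSemisimple_of_squarefree_aeval_eq_zero hsep.squarefree (aeval_eq_zero_of_cubic_eq_zero hg)

theorem eq_zero_or_eq_inv_two_or_eq_one_of_cubic_eq_zero (hg : g * (g - 1) * (2 * g - 1) = 0)
    {μ : K} (hμ : g.HasEigenvalue μ) : μ = 0 ∨ μ = 2⁻¹ ∨ μ = 1 := by
  obtain ⟨v, hv⟩ := hμ.exists_hasEigenvector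
  have h := aeval_apply_of_hasEigenvector hv (p := (X - C 0) * (X - C 1) * (X - C 2⁻¹))
  rw [aeval_eq_zero_of_cubic_eq_zero hg, LinearMap.zero_apply, eq_comm, smul_eq_zero] at h
  simpa [sub_eq_zero, or_comm, or_assoc, hv.2] using h

theorem iSup_eigenspace_eq_top_of_cubic_eq_zero (hg : g * (g - 1) * (2 * g - 1) = 0) :
    ⨆ μ, g.eigenspace μ = ⊤ := by
  -- Lagrange interpolation at `0`, `1`, `1/2` splits `1` into projections onto the eigenspaces.
  have h₀ : g * ((g - 1) * (2 * g - 1)) = 0 := by rw [← hg]; noncomm_ring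
  have h₁ : (g - 1) * (g * (2 * g - 1)) = 0 := by rw [← hg]; noncomm_ring
  have hₕ : (2 * g - 1) * (4 * g * (1 - g)) = 0 := by
    rw [show (2 * g - 1) * (4 * g * (1 - g)) = -4 * (g * (g - 1) * (2 * g - 1)) by noncomm_ring,
      hg, mul_zero]
  have hsum : (g - 1) * (2 * g - 1) + g * (2 * g - 1) + 4 * g * (1 - g) = 1 := by noncomm_ring
  rw [eq_top_iff]
  intro v _
  have hv := LinearMap.congr_fun hsum v
  rw [one_apply] at hv
  rw [← hv]
  refine add_mem (add_mem ?_ ?_) ?_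
  · refine Submodule.mem_iSup_of_mem 0 (mem_eigenspace_iff.mpr ?_)
    simpa using LinearMap.congr_fun h₀ v
  · refine Submodule.mem_iSup_of_mem 1 (mem_eigenspace_iff.mpr ?_)
    simpa [sub_mul, sub_eq_zero] using LinearMap.congr_fun h₁ v
  · refine Submodule.mem_iSup_of_mem 2⁻¹ (mem_eigenspace_iff.mpr ?_)
    have h : (2 * g - 1) ((4 * g * (1 - g)) v) = 0 := by rw [← mul_apply, hₕ, LinearMap.zero_apply]
    generalize (4 * g * (1 - g)) v = w at h ⊢
    rw [LinearMap.sub_apply, two_mul, LinearMap.add_apply, one_apply, sub_eq_zero,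
      ← two_smul K] at h
    exact (eq_inv_smul_iff₀ two_ne_zero).mpr h

end Module.End

end LinearAlgebra

section JordanIdentities

variable {K J : Type*} [Field K] [NeZero (2 : K)] [AddCommGroup J] [Module K J]
  {jmul : J →ₗ[K] J →ₗ[K] J}

theorem jordan_identity_linearized (hcomm : ∀ x y : J, jmul x y = jmul y x)
    (hjordan : ∀ x y : J, jmul (jmul x y) (jmul x x) = jmul x (jmul y (jmul x x)))
    (a b c v : J) :
    jmul a (jmul (jmul b c) v) + jmul b (jmul (jmul c a) v) + jmul c (jmul (jmul a b) v) =
      jmul (jmul b c) (jmul a v) + jmul (jmul c a) (jmul b v) + jmul (jmul a b) (jmul c v) := by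
  let _ : NonUnitalNonAssocCommRing J :=
    { (inferInstance : AddCommGroup J) with
      mul := fun x y ↦ jmul x y
      left_distrib := fun x y z ↦ map_add (jmul x) y z
      right_distrib := fun x y z ↦ LinearMap.map_add₂ jmul x y z
      zero_mul := fun x ↦ LinearMap.map_zero₂ jmul x
      mul_zero := fun x ↦ map_zero (jmul x)
      mul_comm := hcomm }
  have : IsCommJordan J := ⟨hjordan⟩
  let _ := LieRing.ofAssociativeRing (A := AddMonoid.End J)
  have h : (2 : ℕ) • (jmul a (jmul (jmul b c) v) - jmul (jmul b c) (jmul a v) +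
      (jmul b (jmul (jmul c a) v) - jmul (jmul c a) (jmul b v)) +
      (jmul c (jmul (jmul a b) v) - jmul (jmul a b) (jmul c v))) = 0 :=
    DFunLike.congr_fun (two_nsmul_lie_lmul_lmul_add_add_eq_zero a b c) v
  rw [← sub_eq_zero]
  refine smul_right_injective J (two_ne_zero : (2 : K) ≠ 0) ?_
  linear_combination (norm := module) h

theorem commute_jmul_of_orthogonal_idempotent (hcomm : ∀ x y : J, jmul x y = jmul y x)
    (hjordan : ∀ x y : J, jmul (jmul x y) (jmul x x) = jmul x (jmul y (jmul x x)))
    {d e : J} (hd : jmul d d = d) (hde : jmul d e = 0) : Commute (jmul d) (jmul e) := by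
  ext v
  have h := jordan_identity_linearized hcomm hjordan d e d v
  rw [hcomm e d, hde, hd] at h
  simpa using h.symm

theorem jmul_cubic_eq_zero_of_idempotent (hcomm : ∀ x y : J, jmul x y = jmul y x)
    (hjordan : ∀ x y : J, jmul (jmul x y) (jmul x x) = jmul x (jmul y (jmul x x)))
    {d : J} (hd : jmul d d = d) : jmul d * (jmul d - 1) * (2 * jmul d - 1) = 0 := by
  ext w
  have h := jordan_identity_linearized hcomm hjordan d w d d
  simp only [hd] at h
  rw [hcomm w d, hcomm (jmul d w) d] at h
  simp only [Module.End.mul_apply, LinearMap.sub_apply, two_mul, LinearMap.add_apply,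
    Module.End.one_apply, map_sub, map_add, LinearMap.zero_apply]
  linear_combination (norm := module) h

end JordanIdentities

section PeirceDecomposition

variable {J : Type*} [AddCommGroup J] [Module ℝ J] {jmul : J →ₗ[ℝ] J →ₗ[ℝ] J} {r : ℕ}

/-- The eigenvalue of `L_{c_k}` on the Peirce space `J_{ij}`. -/
noncomputable def peirceWeight (i j k : Fin r) : ℝ :=
  ((if k = i then 1 else 0) + (if k = j then 1 else 0)) / 2

theorem peirceWeight_comm (i j : Fin r) : peirceWeight i j = peirceWeight j i := by
  funext k
  simp only [peirceWeight, add_comm]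

theorem sum_mul_peirceWeight (lam : Fin r → ℝ) (i j : Fin r) :
    ∑ k, lam k * peirceWeight i j k = (lam i + lam j) / 2 := by
  simp [peirceWeight, mul_add, add_div, Finset.sum_add_distrib, mul_div_assoc', ← Finset.sum_div]

theorem peirce_eq_iInf_eigenspace (c : Fin r → J) (i j : Fin r) :
    Peirce jmul c i j = ⨅ k, eigenspace (jmul (c k)) (peirceWeight i j k) := by
  ext z
  simp [Peirce, peirceWeight, sub_eq_zero]

theorem exists_forall_sub_single_mem {ι : Type*} [Fintype ι] [DecidableEq ι] {χ : ι → ℝ}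
    (hval : ∀ k, χ k ∈ ({0, 2⁻¹, 1} : Set ℝ)) (hsum : ∑ k, χ k ≠ 0) :
    ∃ i, ∀ k, (χ k - (Pi.single i 2⁻¹ : _ → ℝ) k) ∈ ({0, 2⁻¹, 1} : Set ℝ) := by
  obtain ⟨i, -, hi⟩ := Finset.exists_ne_zero_of_sum_ne_zero hsum
  refine ⟨i, fun k ↦ ?_⟩
  obtain rfl | hk := eq_or_ne k i
  · rw [Pi.single_eq_same]
    rcases hval k with h | h | h
    · exact absurd h hi
    · simp [h]
    · norm_num [Set.mem_singleton_iff.mp h]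
  · simpa [hk] using hval k

theorem exists_eq_peirceWeight (χ : Fin r → ℝ) (hval : ∀ k, χ k ∈ ({0, 2⁻¹, 1} : Set ℝ))
    (hsum : ∑ k, χ k = 1) : ∃ i j, i ≤ j ∧ χ = peirceWeight i j := by
  obtain ⟨i, hi⟩ := exists_forall_sub_single_mem hval (by rw [hsum]; exact one_ne_zero)
  have hsumi : ∑ k, (χ k - (Pi.single i 2⁻¹ : _ → ℝ) k) = 2⁻¹ := by
    norm_num [Finset.sum_sub_distrib, hsum]
  obtain ⟨j, hj⟩ := exists_forall_sub_single_mem hi (by rw [hsumi]; norm_num)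
  have hsumj : ∑ k, (χ k - (Pi.single i 2⁻¹ : _ → ℝ) k - (Pi.single j 2⁻¹ : _ → ℝ) k) = 0 := by
    norm_num [Finset.sum_sub_distrib, hsum]
  have hχ : χ = peirceWeight i j := by
    funext k
    have hk := (Finset.sum_eq_zero_iff_of_nonneg (fun k _ ↦ ?_)).mp hsumj k (Finset.mem_univ k)
    · simp only [Pi.single_apply] at hk
      simp only [peirceWeight]
      split_ifs at hk ⊢ <;> linarith
    · rcases hj k with h | h | h <;> rw [h] <;> norm_num
  rcases le_total i j with hij | hji
  · exact ⟨i, j, hij, hχ⟩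
  · exact ⟨j, i, hji, hχ.trans (peirceWeight_comm i j)⟩

theorem exists_peirceWeight_of_mem_iInf_eigenspace
    (hcomm : ∀ x y : J, jmul x y = jmul y x)
    (hjordan : ∀ x y : J, jmul (jmul x y) (jmul x x) = jmul x (jmul y (jmul x x)))
    {one : J} (hone : ∀ x : J, jmul one x = x) {c : Fin r → J}
    (hidem : ∀ i, IsIdem jmul (c i)) (hsum : ∑ i, c i = one) {χ : Fin r → ℝ} {z : J}
    (hz : z ∈ ⨅ k, eigenspace (jmul (c k)) (χ k)) (hz0 : z ≠ 0) :
    ∃ i j, i ≤ j ∧ χ = peirceWeight i j := by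
  refine exists_eq_peirceWeight χ (fun k ↦ ?_) ?_
  · refine Module.End.eq_zero_or_eq_inv_two_or_eq_one_of_cubic_eq_zero
      (jmul_cubic_eq_zero_of_idempotent hcomm hjordan (hidem k)) ?_
    exact Module.End.hasEigenvalue_of_hasEigenvector ⟨(Submodule.mem_iInf _).mp hz k, hz0⟩
  · have h := Module.End.sum_smul_apply_of_mem_iInf_eigenspace hz 1
    simp only [Pi.one_apply, one_smul, one_mul, ← map_sum, hsum, hone] at h
    exact smul_left_injective ℝ hz0 (by simpa using h.symm)

theorem iSup_peirce_eq_top [FiniteDimensional ℝ J]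
    (hcomm : ∀ x y : J, jmul x y = jmul y x)
    (hjordan : ∀ x y : J, jmul (jmul x y) (jmul x x) = jmul x (jmul y (jmul x x)))
    {one : J} (hone : ∀ x : J, jmul one x = x) {c : Fin r → J}
    (hidem : ∀ i, IsIdem jmul (c i)) (horth : ∀ i j, i ≠ j → jmul (c i) (c j) = 0)
    (hsum : ∑ i, c i = one) :
    ⨆ (i : Fin r) (j : Fin r) (_ : i ≤ j), Peirce jmul c i j = ⊤ := by
  have hcubic k := jmul_cubic_eq_zero_of_idempotent hcomm hjordan (hidem k)
  have hjoint := Module.End.iSup_iInf_eigenspace_eq_top_of_commute (fun k ↦ jmul (c k))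
    (fun k l hkl ↦ commute_jmul_of_orthogonal_idempotent hcomm hjordan (hidem k) (horth k l hkl))
    (fun k ↦ (Module.End.isSemisimple_of_cubic_eq_zero (hcubic k)).isFinitelySemisimple)
    (fun k ↦ Module.End.iSup_eigenspace_eq_top_of_cubic_eq_zero (hcubic k))
  rw [eq_top_iff, ← hjoint]
  refine iSup_le fun χ z hz ↦ ?_
  obtain rfl | hz0 := eq_or_ne z 0
  · exact zero_mem _
  obtain ⟨i, j, hij, rfl⟩ :=
    exists_peirceWeight_of_mem_iInf_eigenspace hcomm hjordan hone hidem hsum hz hz0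
  rw [← peirce_eq_iInf_eigenspace] at hz
  exact Submodule.mem_iSup_of_mem i <| Submodule.mem_iSup_of_mem j <|
    Submodule.mem_iSup_of_mem hij hz

theorem map_jmul_sum_smul_peirce (c : Fin r → J) (lam : Fin r → ℝ) (i j : Fin r) :
    (Peirce jmul c i j).map (jmul (∑ k, lam k • c k)) =
      ⨆ (_ : lam i + lam j ≠ 0), Peirce jmul c i j := by
  have h : ∀ z ∈ Peirce jmul c i j, jmul (∑ k, lam k • c k) z = ((lam i + lam j) / 2) • z := by
    intro z hz
    rw [peirce_eq_iInf_eigenspace] at hz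
    have := Module.End.sum_smul_apply_of_mem_iInf_eigenspace hz lam
    rw [sum_mul_peirceWeight] at this
    simp only [← this, map_sum, map_smul]
  rw [Submodule.map_eq_iSup_of_forall_apply_eq_smul h]
  simp only [ne_eq, div_eq_zero_iff, two_ne_zero, or_false]

end PeirceDecomposition

theorem stmt8_general (J : Type*) [AddCommGroup J] [Module ℝ J] [FiniteDimensional ℝ J]
    (jmul : J →ₗ[ℝ] J →ₗ[ℝ] J)
    (hcomm : ∀ x y : J, jmul x y = jmul y x)
    (hjordan : ∀ x y : J, jmul (jmul x y) (jmul x x) = jmul x (jmul y (jmul x x)))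
    (one : J) (hone : ∀ x : J, jmul one x = x)
    (r : ℕ) (c : Fin r → J) (hframe : IsJordanFrame jmul one c)
    (lam : Fin r → ℝ) :
    LinearMap.range (jmul (∑ i, lam i • c i)) =
      ⨆ (i : Fin r) (j : Fin r) (_ : i ≤ j) (_ : lam i + lam j ≠ 0),
        Peirce jmul c i j := by
  obtain ⟨hprim, horth, hsum⟩ := hframe
  have hdecomp := iSup_peirce_eq_top hcomm hjordan hone (fun i ↦ (hprim i).1) horth hsum
  rw [LinearMap.range_eq_map, ← hdecomp]
  simp only [Submodule.map_iSup, map_jmul_sum_smul_peirce]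

/-- for `x = Σ λ_i c_i`, the range of `L_x` is the sum of the Peirce
spaces `J_{ij}` with `λ_i + λ_j ≠ 0`. -/
theorem stmt8 (J : Type*) [AddCommGroup J] [Module ℝ J] [FiniteDimensional ℝ J]
    (jmul : J →ₗ[ℝ] J →ₗ[ℝ] J)
    (hcomm : ∀ x y : J, jmul x y = jmul y x)
    (hjordan : ∀ x y : J, jmul (jmul x y) (jmul x x) = jmul x (jmul y (jmul x x)))
    (one : J) (hone : ∀ x : J, jmul one x = x)
    (hpos : ∀ x : J, x ≠ 0 → 0 < tauF jmul x x)
    (r : ℕ) (c : Fin r → J) (hframe : IsJordanFrame jmul one c)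
    (lam : Fin r → ℝ) :
    LinearMap.range (jmul (∑ i, lam i • c i)) =
      ⨆ (i : Fin r) (j : Fin r) (_ : i ≤ j) (_ : lam i + lam j ≠ 0),
        Peirce jmul c i j :=
  stmt8_general J jmul hcomm hjordan one hone r c hframe lam
end

section
/- Let J be a finite-dimensional, unital, positive real Jordan algebra, (c₁,…,c_r) a Jordan frame, λ₁,…,λ_r ∈ ℝ, and x = Σ_{i=1}^r λ_i c_i. Then Der₀(J)·x = Σ_{1≤i≤j≤r, λ_i≠λ_j} J_{ij}, i.e., the set of values at x of inner derivations equals the sum of the Peirce spaces indexed by pairs with distinct coefficients. -/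
open Finset

/-!
The operators `L_{c_k}` commute pairwise and each satisfies `2L³ - 3L² + L = 0`, so `J` is spanned
by their joint eigenvectors; the only joint eigenvalue patterns that `∑ c_k = 1` allows are those
of the Peirce spaces `J_{ij}`. Since `x` acts on `J_{ij}` by `(λ_i + λ_j)/2`, for `u ∈ J_{ij}` and
`v ∈ J_{kl}` the commutator `[L_u, L_v]` sends `x` to `((λ_k + λ_l) - (λ_i + λ_j))/2 · u∘v`. By
the Peirce multiplication rules `u∘v = 0` unless the pairs share an index `m`, say
`{i,j} = {m,p}` and `{k,l} = {m,q}`; then `u∘v ∈ J_{pq}` and the coefficient is `(λ_q - λ_p)/2`.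
Conversely `[L_z, L_{c_j}] x = (λ_j - λ_i)/4 · z` for `z ∈ J_{ij}`.
-/

section Peirce

variable {J : Type*} [AddCommGroup J] [Module ℝ J] {jmul : J →ₗ[ℝ] J →ₗ[ℝ] J}

structure IsJordanMul (jmul : J →ₗ[ℝ] J →ₗ[ℝ] J) : Prop where
  comm : ∀ x y : J, jmul x y = jmul y x
  jordan : ∀ x y : J, jmul (jmul x y) (jmul x x) = jmul x (jmul y (jmul x x))

namespace IsJordanMul

theorem linearized (hJ : IsJordanMul jmul) (y a b c : J) :
    jmul (jmul a y) (jmul b c) + jmul (jmul b y) (jmul a c) + jmul (jmul c y) (jmul a b) =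
      jmul a (jmul y (jmul b c)) + jmul b (jmul y (jmul a c)) + jmul c (jmul y (jmul a b)) := by
  have h := fun x => hJ.jordan x y
  have habc := h (a + b + c)
  have hab := h (a + b)
  have hac := h (a + c)
  have hbc := h (b + c)
  simp only [map_add, LinearMap.add_apply, hJ.comm b a, hJ.comm c a, hJ.comm c b]
    at habc hab hac hbc
  linear_combination (norm := module) (2⁻¹ : ℝ) • (habc - hab - hac - hbc + h a + h b + h c)

theorem mul_mul_comm_of_mul_eq_zero (hJ : IsJordanMul jmul) {e f : J} (he : jmul e e = e)
    (hef : jmul e f = 0) (y : J) : jmul e (jmul f y) = jmul f (jmul e y) := by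
  have h := hJ.linearized y e e f
  rw [hef, he] at h
  simpa [hJ.comm (jmul f y) e, hJ.comm y e] using h

theorem idem_cubic (hJ : IsJordanMul jmul) {e : J} (he : jmul e e = e) (z : J) :
    (2 : ℝ) • jmul e (jmul e (jmul e z)) + jmul e z = (3 : ℝ) • jmul e (jmul e z) := by
  have h := hJ.linearized e z e e
  simp only [he] at h
  rw [hJ.comm z e, hJ.comm (jmul e z) e] at h
  linear_combination (norm := module) (-1 : ℝ) • h

theorem eigenvalue_of_idem (hJ : IsJordanMul jmul) {e w : J} {μ : ℝ} (he : jmul e e = e)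
    (hw : jmul e w = μ • w) (hw0 : w ≠ 0) : μ = 0 ∨ μ = 1 / 2 ∨ μ = 1 := by
  have h := hJ.idem_cubic he w
  simp only [hw, map_smul, smul_smul] at h
  have hpoly : (μ * (2 * μ - 1) * (μ - 1)) • w = 0 := by
    linear_combination (norm := module) h
  rcases mul_eq_zero.1 ((smul_eq_zero.1 hpoly).resolve_right hw0) with h | h
  · rcases mul_eq_zero.1 h with h | h
    · exact .inl h
    · exact .inr (.inl (by linarith))
  · exact .inr (.inr (by linarith))

theorem mul_mul_eq_smul_of_ne_half (hJ : IsJordanMul jmul) {e u v : J} {α β : ℝ}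
    (he : jmul e e = e) (hu : jmul e u = α • u) (hv : jmul e v = β • v) (hα : α ≠ 1 / 2) :
    jmul e (jmul u v) = β • jmul u v := by
  have h := hJ.linearized v e u e
  rw [hJ.comm u e, he, hJ.comm v e, hJ.comm (jmul u v) e, hu, hv] at h
  simp only [map_smul, LinearMap.smul_apply, smul_smul] at h
  rw [hJ.comm v u] at h
  have h2 : (1 - 2 * α) • jmul e (jmul u v) = (1 - 2 * α) • β • jmul u v := by
    linear_combination (norm := module) h
  exact smul_right_injective J (fun h0 => hα (by linarith)) h2

theorem mul_mul_eq_add_smul (hJ : IsJordanMul jmul) {e u v : J} {α β : ℝ}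
    (he : jmul e e = e) (hu : jmul e u = α • u) (hv : jmul e v = β • v) (h : α = 0 ∨ β = 0) :
    jmul e (jmul u v) = (α + β) • jmul u v := by
  rcases h with rfl | rfl
  · rw [zero_add]
    exact hJ.mul_mul_eq_smul_of_ne_half he hu hv (by norm_num)
  · rw [add_zero, hJ.comm u v]
    exact hJ.mul_mul_eq_smul_of_ne_half he hv hu (by norm_num)

theorem le_iSup_inf_eigenspace (hJ : IsJordanMul jmul) {e : J} (he : jmul e e = e)
    {W : Submodule ℝ J} (hW : ∀ w ∈ W, jmul e w ∈ W) :
    W ≤ ⨆ μ : ℝ, W ⊓ Module.End.eigenspace (jmul e) μ := by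
  intro z hz
  have hz₁ := hW z hz
  have hz₂ := hW _ hz₁
  have cub := hJ.idem_cubic he z
  have mem : ∀ (μ : ℝ) (w : J), w ∈ W → jmul e w = μ • w →
      w ∈ ⨆ μ : ℝ, W ⊓ Module.End.eigenspace (jmul e) μ :=
    fun μ w hw hμ => Submodule.mem_iSup_of_mem μ ⟨hw, Module.End.mem_eigenspace_iff.2 hμ⟩
  -- the spectral projections `2L² - 3L + 1`, `4L - 4L²`, `2L² - L` onto the eigenvalues 0, ½, 1
  have hsplit : z = (z - (3 : ℝ) • jmul e z + (2 : ℝ) • jmul e (jmul e z)) +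
      ((4 : ℝ) • jmul e z - (4 : ℝ) • jmul e (jmul e z)) +
      ((2 : ℝ) • jmul e (jmul e z) - jmul e z) := by
    module
  rw [hsplit]
  refine add_mem (add_mem (mem 0 _ ?_ ?_) (mem (1 / 2) _ ?_ ?_)) (mem 1 _ ?_ ?_)
  · exact W.add_mem (W.sub_mem hz (W.smul_mem _ hz₁)) (W.smul_mem _ hz₂)
  · simp only [map_add, map_sub, map_smul]
    linear_combination (norm := module) cub
  · exact W.sub_mem (W.smul_mem _ hz₁) (W.smul_mem _ hz₂)
  · simp only [map_sub, map_smul]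
    linear_combination (norm := module) (-2 : ℝ) • cub
  · exact W.sub_mem (W.smul_mem _ hz₂) hz₁
  · simp only [map_sub, map_smul]
    linear_combination (norm := module) cub

end IsJordanMul

structure IsIdempotentFrame (jmul : J →ₗ[ℝ] J →ₗ[ℝ] J) {r : ℕ} (c : Fin r → J) : Prop where
  idem : ∀ i, jmul (c i) (c i) = c i
  orth : ∀ i j, i ≠ j → jmul (c i) (c j) = 0
  sum_mul : ∑ i, jmul (c i) = LinearMap.id

theorem IsJordanFrame.isIdempotentFrame {one : J} {r : ℕ} {c : Fin r → J}
    (h : IsJordanFrame jmul one c) (hone : ∀ x : J, jmul one x = x) :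
    IsIdempotentFrame jmul c where
  idem i := (h.1 i).1
  orth := h.2.1
  sum_mul := by
    rw [← map_sum, h.2.2]
    exact LinearMap.ext hone

variable {r : ℕ} {c : Fin r → J}

namespace IsIdempotentFrame

theorem sum_smul_eq_self (hc : IsIdempotentFrame jmul c) {f : Fin r → ℝ} {w : J}
    (hw : ∀ k, jmul (c k) w = f k • w) : (∑ k, f k) • w = w := by
  calc (∑ k, f k) • w = (∑ k, jmul (c k)) w := by
        rw [LinearMap.sum_apply, Finset.sum_smul]
        exact Finset.sum_congr rfl fun k _ => (hw k).symm
    _ = w := by rw [hc.sum_mul, LinearMap.id_apply]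

theorem mul_eq_smul_of_forall_ne (hc : IsIdempotentFrame jmul c) {f : Fin r → ℝ} {w : J}
    {m : Fin r} (hw : ∀ k, k ≠ m → jmul (c k) w = f k • w) (hf : ∑ k, f k = 1) :
    jmul (c m) w = f m • w := by
  have hsum : jmul (c m) w + ∑ k ∈ univ.erase m, jmul (c k) w = w := by
    rw [Finset.add_sum_erase univ (fun k => jmul (c k) w) (mem_univ m), ← LinearMap.sum_apply,
      hc.sum_mul, LinearMap.id_apply]
  have hf' := Finset.add_sum_erase univ f (mem_univ m)
  rw [Finset.sum_congr rfl fun k hk => hw k (ne_of_mem_erase hk), ← Finset.sum_smul,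
    show ∑ k ∈ univ.erase m, f k = 1 - f m by linarith] at hsum
  linear_combination (norm := module) hsum

theorem iSup_iInf_eigenspace_eq_top (hc : IsIdempotentFrame jmul c) (hJ : IsJordanMul jmul) :
    ⨆ f : Fin r → ℝ, ⨅ k, Module.End.eigenspace (jmul (c k)) (f k) = ⊤ := by
  suffices h : ∀ s : Finset (Fin r),
      ⊤ ≤ ⨆ f : Fin r → ℝ, ⨅ k ∈ s, Module.End.eigenspace (jmul (c k)) (f k) by
    simpa using h univ
  intro s
  induction s using Finset.induction_on with
  | empty => simp
  | insert a s ha ih =>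
    refine ih.trans (iSup_le fun f => ?_)
    have hW : ∀ w ∈ ⨅ k ∈ s, Module.End.eigenspace (jmul (c k)) (f k),
        jmul (c a) w ∈ ⨅ k ∈ s, Module.End.eigenspace (jmul (c k)) (f k) := by
      intro w hw
      simp only [Submodule.mem_iInf, Module.End.mem_eigenspace_iff] at hw ⊢
      intro k hk
      rw [hJ.mul_mul_comm_of_mul_eq_zero (hc.idem k) (hc.orth k a (ne_of_mem_of_not_mem hk ha)),
        hw k hk, map_smul]
    refine (hJ.le_iSup_inf_eigenspace (hc.idem a) hW).trans
      (iSup_le fun μ => le_iSup_of_le (Function.update f a μ) ?_)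
    rw [Finset.iInf_insert, Function.update_self, inf_comm]
    refine inf_le_inf_left _ (iInf₂_mono fun k hk => ?_)
    rw [Function.update_of_ne (ne_of_mem_of_not_mem hk ha)]

end IsIdempotentFrame

noncomputable def peirceCoeff (i j k : Fin r) : ℝ :=
  ((if k = i then 1 else 0) + (if k = j then 1 else 0)) / 2

theorem mem_peirce {i j : Fin r} {z : J} :
    z ∈ Peirce jmul c i j ↔ ∀ k, jmul (c k) z = peirceCoeff i j k • z := by
  simp only [Peirce, peirceCoeff, Submodule.mem_iInf, LinearMap.mem_ker, LinearMap.sub_apply,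
    LinearMap.smul_apply, LinearMap.id_apply, sub_eq_zero]

theorem peirce_comm (i j : Fin r) : Peirce jmul c i j = Peirce jmul c j i := by
  unfold Peirce
  exact iInf_congr fun k => by rw [add_comm]

theorem sum_mul_peirceCoeff (lam : Fin r → ℝ) (i j : Fin r) :
    ∑ k, lam k * peirceCoeff i j k = (lam i + lam j) / 2 := by
  simp [peirceCoeff, mul_div_assoc', ← Finset.sum_div, mul_add, Finset.sum_add_distrib]

theorem sum_peirceCoeff (i j : Fin r) : ∑ k, peirceCoeff i j k = 1 := by
  simpa using sum_mul_peirceCoeff (fun _ => 1) i j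

theorem exists_eq_peirceCoeff {f : Fin r → ℝ} (hf : ∀ k, f k = 0 ∨ f k = 1 / 2 ∨ f k = 1)
    (hsum : ∑ k, f k = 1) : ∃ i j, f = peirceCoeff i j := by
  have hnonneg : ∀ k, 0 ≤ f k := fun k => by rcases hf k with h | h | h <;> rw [h] <;> norm_num
  have vanish : ∀ s : Finset (Fin r), ∑ k ∈ s, f k = 1 → ∀ k ∉ s, f k = 0 := by
    intro s hs k hk
    have hsplit := Finset.sum_sdiff (subset_univ s) (f := f)
    rw [hs, hsum, add_eq_right] at hsplit
    exact (Finset.sum_eq_zero_iff_of_nonneg fun k _ => hnonneg k).1 hsplit k (by simpa using hk)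
  obtain ⟨i, hi⟩ : ∃ i, f i ≠ 0 := by
    by_contra! h
    simp [h] at hsum
  rcases hf i with h | hi2 | hi1
  · exact absurd h hi
  · obtain ⟨j, hji, hj⟩ : ∃ j, j ≠ i ∧ f j ≠ 0 := by
      by_contra! h
      rw [Finset.sum_eq_single i (fun j _ hj => h j hj) (by simp), hi2] at hsum
      norm_num at hsum
    have hpair : f i + f j ≤ 1 := by
      rw [← hsum, ← Finset.sum_pair hji.symm]
      exact Finset.sum_le_univ_sum_of_nonneg hnonneg
    have hj2 : f j = 1 / 2 := by
      rcases hf j with h | h | h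
      · exact absurd h hj
      · exact h
      · linarith
    have hrest := vanish {i, j} (by rw [Finset.sum_pair hji.symm]; linarith)
    refine ⟨i, j, funext fun k => ?_⟩
    by_cases hki : k = i
    · subst hki
      simp [peirceCoeff, hji.symm, hi2]
    by_cases hkj : k = j
    · subst hkj
      simp [peirceCoeff, hji, hj2]
    · simp [peirceCoeff, hki, hkj, hrest k (by simp [hki, hkj])]
  · have hrest := vanish {i} (by simp [hi1])
    refine ⟨i, i, funext fun k => ?_⟩
    by_cases hki : k = i
    · subst hki
      simp [peirceCoeff, hi1]
    · simp [peirceCoeff, hki, hrest k (by simp [hki])]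

theorem IsIdempotentFrame.iSup_peirce_eq_top (hc : IsIdempotentFrame jmul c)
    (hJ : IsJordanMul jmul) : ⨆ (i : Fin r) (j : Fin r), Peirce jmul c i j = ⊤ := by
  rw [eq_top_iff, ← hc.iSup_iInf_eigenspace_eq_top hJ]
  refine iSup_le fun f w hw => ?_
  simp only [Submodule.mem_iInf, Module.End.mem_eigenspace_iff] at hw
  obtain rfl | hw0 := eq_or_ne w 0
  · exact zero_mem _
  have hsum : ∑ k, f k = 1 := by
    have h : (∑ k, f k - 1) • w = 0 := by rw [sub_smul, hc.sum_smul_eq_self hw, one_smul, sub_self]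
    exact sub_eq_zero.1 ((smul_eq_zero.1 h).resolve_right hw0)
  obtain ⟨i, j, rfl⟩ :=
    exists_eq_peirceCoeff (fun k => hJ.eigenvalue_of_idem (hc.idem k) (hw k) hw0) hsum
  exact Submodule.mem_iSup_of_mem i (Submodule.mem_iSup_of_mem j (mem_peirce.2 hw))

theorem IsIdempotentFrame.mem_peirce_self (hc : IsIdempotentFrame jmul c) (j : Fin r) :
    c j ∈ Peirce jmul c j j := by
  refine mem_peirce.2 fun k => ?_
  obtain rfl | hkj := eq_or_ne k j
  · simp [peirceCoeff, hc.idem k]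
  · simp [peirceCoeff, hkj, hc.orth k j hkj]

theorem mul_sum_smul_of_mem_peirce (lam : Fin r → ℝ) {i j : Fin r} {z : J}
    (hz : z ∈ Peirce jmul c i j) : jmul (∑ m, lam m • c m) z = ((lam i + lam j) / 2) • z := by
  rw [mem_peirce] at hz
  simp only [map_sum, map_smul, LinearMap.sum_apply, LinearMap.smul_apply, hz, smul_smul,
    ← Finset.sum_smul, sum_mul_peirceCoeff]

theorem IsIdempotentFrame.mul_mem_peirce (hc : IsIdempotentFrame jmul c) (hJ : IsJordanMul jmul)
    {s m t : Fin r} (hst : s ≠ t) {u v : J} (hu : u ∈ Peirce jmul c s m)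
    (hv : v ∈ Peirce jmul c m t) : jmul u v ∈ Peirce jmul c s t := by
  rw [mem_peirce] at hu hv ⊢
  have hne : ∀ n, n ≠ m → jmul (c n) (jmul u v) = peirceCoeff s t n • jmul u v := by
    intro n hn
    rw [hJ.mul_mul_eq_add_smul (hc.idem n) (hu n) (hv n) ?_]
    · simp only [peirceCoeff, if_neg hn]
      ring_nf
    · obtain rfl | hns := eq_or_ne n s
      · simp [peirceCoeff, hst, hn]
      · simp [peirceCoeff, hns, hn]
  intro n
  obtain rfl | hn := eq_or_ne n m
  · exact hc.mul_eq_smul_of_forall_ne hne (sum_peirceCoeff s t)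
  · exact hne n hn

theorem IsIdempotentFrame.mul_eq_zero_of_disjoint (hc : IsIdempotentFrame jmul c)
    (hJ : IsJordanMul jmul) {i j k l : Fin r} (hik : i ≠ k) (hil : i ≠ l) (hjk : j ≠ k)
    (hjl : j ≠ l) {u v : J} (hu : u ∈ Peirce jmul c i j) (hv : v ∈ Peirce jmul c k l) :
    jmul u v = 0 := by
  rw [mem_peirce] at hu hv
  have hcoeff : ∀ n, peirceCoeff i j n = 0 ∨ peirceCoeff k l n = 0 := by
    intro n
    simp only [peirceCoeff]
    split_ifs <;> subst_vars <;> simp_all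
  have h := hc.sum_smul_eq_self fun n =>
    hJ.mul_mul_eq_add_smul (hc.idem n) (hu n) (hv n) (hcoeff n)
  rw [Finset.sum_add_distrib, sum_peirceCoeff, sum_peirceCoeff] at h
  linear_combination (norm := module) h

end Peirce

section InnerDerivations

variable {J : Type*} [AddCommGroup J] [Module ℝ J] {jmul : J →ₗ[ℝ] J →ₗ[ℝ] J}
  {r : ℕ} {c : Fin r → J}

/-- `Der₀(J)`. -/
noncomputable def innerDerivations (jmul : J →ₗ[ℝ] J →ₗ[ℝ] J) : Submodule ℝ (J →ₗ[ℝ] J) :=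
  Submodule.span ℝ {D | ∃ u v : J, D = jmul u ∘ₗ jmul v - jmul v ∘ₗ jmul u}

noncomputable def peirceSumOfNe (jmul : J →ₗ[ℝ] J →ₗ[ℝ] J) (c : Fin r → J) (lam : Fin r → ℝ) :
    Submodule ℝ J :=
  ⨆ (i : Fin r) (j : Fin r) (_ : i ≤ j) (_ : lam i ≠ lam j), Peirce jmul c i j

theorem peirce_le_peirceSumOfNe {lam : Fin r → ℝ} {p q : Fin r} (h : lam p ≠ lam q) :
    Peirce jmul c p q ≤ peirceSumOfNe jmul c lam := by
  rcases le_total p q with hpq | hqp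
  · exact le_iSup₂_of_le p q <| le_iSup₂_of_le hpq h le_rfl
  · rw [peirce_comm]
    exact le_iSup₂_of_le q p <| le_iSup₂_of_le hqp h.symm le_rfl

theorem IsIdempotentFrame.smul_mul_mem_peirceSumOfNe_of_common (hc : IsIdempotentFrame jmul c)
    (hJ : IsJordanMul jmul) (lam : Fin r → ℝ) {m p q : Fin r} {u v : J}
    (hu : u ∈ Peirce jmul c m p) (hv : v ∈ Peirce jmul c m q) {a : ℝ}
    (ha : lam p = lam q → a = 0) : a • jmul u v ∈ peirceSumOfNe jmul c lam := by
  by_cases h : lam p = lam q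
  · simp [ha h]
  rw [peirce_comm] at hu
  exact Submodule.smul_mem _ a
    (peirce_le_peirceSumOfNe h (hc.mul_mem_peirce hJ (fun e => h (congrArg lam e)) hu hv))

theorem IsIdempotentFrame.smul_mul_mem_peirceSumOfNe (hc : IsIdempotentFrame jmul c)
    (hJ : IsJordanMul jmul) (lam : Fin r → ℝ) {i j k l : Fin r} {u v : J}
    (hu : u ∈ Peirce jmul c i j) (hv : v ∈ Peirce jmul c k l) :
    ((lam k + lam l - (lam i + lam j)) / 2) • jmul u v ∈ peirceSumOfNe jmul c lam := by
  by_cases hik : i = k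
  · subst hik
    exact hc.smul_mul_mem_peirceSumOfNe_of_common hJ lam hu hv fun h => by rw [h]; ring
  by_cases hil : i = l
  · subst hil
    rw [peirce_comm] at hv
    exact hc.smul_mul_mem_peirceSumOfNe_of_common hJ lam hu hv fun h => by rw [h]; ring
  by_cases hjk : j = k
  · subst hjk
    rw [peirce_comm] at hu
    exact hc.smul_mul_mem_peirceSumOfNe_of_common hJ lam hu hv fun h => by rw [h]; ring
  by_cases hjl : j = l
  · subst hjl
    rw [peirce_comm] at hu hv
    exact hc.smul_mul_mem_peirceSumOfNe_of_common hJ lam hu hv fun h => by rw [h]; ring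
  rw [hc.mul_eq_zero_of_disjoint hJ hik hil hjk hjl hu hv, smul_zero]
  exact zero_mem _

theorem IsJordanMul.commutator_apply_eq (hJ : IsJordanMul jmul) (lam : Fin r → ℝ)
    {i j k l : Fin r} {u v : J} (hu : u ∈ Peirce jmul c i j) (hv : v ∈ Peirce jmul c k l) :
    jmul u (jmul v (∑ m, lam m • c m)) - jmul v (jmul u (∑ m, lam m • c m)) =
      ((lam k + lam l - (lam i + lam j)) / 2) • jmul u v := by
  rw [hJ.comm v (∑ m, lam m • c m), hJ.comm u (∑ m, lam m • c m),
    mul_sum_smul_of_mem_peirce lam hv, mul_sum_smul_of_mem_peirce lam hu, map_smul, map_smul,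
    hJ.comm v u]
  module

theorem IsIdempotentFrame.commutator_apply_mem (hc : IsIdempotentFrame jmul c)
    (hJ : IsJordanMul jmul) (lam : Fin r → ℝ) (u v : J) :
    jmul u (jmul v (∑ m, lam m • c m)) - jmul v (jmul u (∑ m, lam m • c m)) ∈
      peirceSumOfNe jmul c lam := by
  let A := jmul.compl₂ (jmul.flip (∑ m, lam m • c m))
  suffices h : Submodule.map₂ (A - A.flip) ⊤ ⊤ ≤ peirceSumOfNe jmul c lam from
    h (Submodule.apply_mem_map₂ _ trivial trivial)
  simp only [← hc.iSup_peirce_eq_top hJ, Submodule.map₂_iSup_left, Submodule.map₂_iSup_right,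
    iSup_le_iff, Submodule.map₂_le]
  intro i j k l u hu v hv
  change jmul u (jmul v _) - jmul v (jmul u _) ∈ _
  rw [hJ.commutator_apply_eq lam hu hv]
  exact hc.smul_mul_mem_peirceSumOfNe hJ lam hu hv

theorem IsIdempotentFrame.map_applyₗ_innerDerivations_le (hc : IsIdempotentFrame jmul c)
    (hJ : IsJordanMul jmul) (lam : Fin r → ℝ) :
    (innerDerivations jmul).map (LinearMap.applyₗ (∑ m, lam m • c m)) ≤
      peirceSumOfNe jmul c lam := by
  rw [innerDerivations, Submodule.map_span, Submodule.span_le]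
  rintro _ ⟨_, ⟨u, v, rfl⟩, rfl⟩
  exact hc.commutator_apply_mem hJ lam u v

theorem IsIdempotentFrame.peirceSumOfNe_le_map_applyₗ (hc : IsIdempotentFrame jmul c)
    (hJ : IsJordanMul jmul) (lam : Fin r → ℝ) :
    peirceSumOfNe jmul c lam ≤
      (innerDerivations jmul).map (LinearMap.applyₗ (∑ m, lam m • c m)) := by
  refine iSup₂_le fun i j => iSup₂_le fun _ hij z hz => ?_
  have hji : j ≠ i := fun h => hij (congrArg lam h.symm)
  have hcz : jmul (c j) z = (1 / 2 : ℝ) • z := by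
    rw [mem_peirce.1 hz j]
    simp [peirceCoeff, hji]
  have h := hJ.commutator_apply_eq lam hz (hc.mem_peirce_self j)
  rw [hJ.comm z (c j), hcz, smul_smul] at h
  refine ⟨(4 / (lam j - lam i)) • (jmul z ∘ₗ jmul (c j) - jmul (c j) ∘ₗ jmul z),
    Submodule.smul_mem _ _ (Submodule.subset_span ⟨z, c j, rfl⟩), ?_⟩
  have hne : lam j - lam i ≠ 0 := sub_ne_zero.2 (Ne.symm hij)
  simp only [LinearMap.applyₗ_apply_apply, LinearMap.smul_apply, LinearMap.sub_apply,
    LinearMap.comp_apply, h, smul_smul]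
  convert one_smul ℝ z using 2
  field_simp
  ring

end InnerDerivations

theorem stmt9_general (J : Type*) [AddCommGroup J] [Module ℝ J]
    (jmul : J →ₗ[ℝ] J →ₗ[ℝ] J)
    (hcomm : ∀ x y : J, jmul x y = jmul y x)
    (hjordan : ∀ x y : J, jmul (jmul x y) (jmul x x) = jmul x (jmul y (jmul x x)))
    (one : J) (hone : ∀ x : J, jmul one x = x)
    (r : ℕ) (c : Fin r → J) (hframe : IsJordanFrame jmul one c)
    (lam : Fin r → ℝ) :
    Submodule.map
        (LinearMap.applyₗ (∑ i, lam i • c i) : (J →ₗ[ℝ] J) →ₗ[ℝ] J)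
        (Submodule.span ℝ
          {D : J →ₗ[ℝ] J | ∃ u v : J, D = (jmul u) ∘ₗ (jmul v) - (jmul v) ∘ₗ (jmul u)}) =
      ⨆ (i : Fin r) (j : Fin r) (_ : i ≤ j) (_ : lam i ≠ lam j),
        Peirce jmul c i j := by
  have hJ : IsJordanMul jmul := ⟨hcomm, hjordan⟩
  have hc := hframe.isIdempotentFrame hone
  exact le_antisymm (hc.map_applyₗ_innerDerivations_le hJ lam)
    (hc.peirceSumOfNe_le_map_applyₗ hJ lam)

/-- for `x = Σ λ_i c_i`, the set `Der₀(J)·x` of values at `x` of inner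
derivations (the span of commutators `[L_u, L_v]`) equals the sum of the Peirce
spaces `J_{ij}` with `λ_i ≠ λ_j`. -/
theorem stmt9 (J : Type*) [AddCommGroup J] [Module ℝ J] [FiniteDimensional ℝ J]
    (jmul : J →ₗ[ℝ] J →ₗ[ℝ] J)
    (hcomm : ∀ x y : J, jmul x y = jmul y x)
    (hjordan : ∀ x y : J, jmul (jmul x y) (jmul x x) = jmul x (jmul y (jmul x x)))
    (one : J) (hone : ∀ x : J, jmul one x = x)
    (hpos : ∀ x : J, x ≠ 0 → 0 < tauF jmul x x)
    (r : ℕ) (c : Fin r → J) (hframe : IsJordanFrame jmul one c)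
    (lam : Fin r → ℝ) :
    Submodule.map
        (LinearMap.applyₗ (∑ i, lam i • c i) : (J →ₗ[ℝ] J) →ₗ[ℝ] J)
        (Submodule.span ℝ
          {D : J →ₗ[ℝ] J | ∃ u v : J, D = (jmul u) ∘ₗ (jmul v) - (jmul v) ∘ₗ (jmul u)}) =
      ⨆ (i : Fin r) (j : Fin r) (_ : i ≤ j) (_ : lam i ≠ lam j),
        Peirce jmul c i j :=
  stmt9_general J jmul hcomm hjordan one hone r c hframe lam
end

section
/- Let J be a finite-dimensional unital real Jordan algebra with a Jordan frame (c₁,…,c_r), let λ₁,…,λ_r ∈ ℝ, x = Σ_{k=1}^r λ_k c_k, and let u ∈ J_{ij} for some 1 ≤ i ≤ j ≤ r. Then for every v ∈ J, τ(x, u∘v) = ½ (λ_i + λ_j) τ(u, v). -/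
open Finset

/-!
The trace form is associative: linearizing the Jordan identity twice expresses
`L_{(a∘b)∘w}` through products of multiplication operators, and by cyclicity of the trace
`tr L_{(a∘b)∘w}` is symmetric in `b` and `w`, which gives `τ(a∘b, w) = τ(a, b∘w)`.
Hence `τ(x, u∘v) = τ(x∘u, v)`, and `u ∈ J_{ij}` is an eigenvector of `L_x` with
eigenvalue `½(λ_i + λ_j)`.
-/

section JordanTrace

variable {J : Type*} [AddCommGroup J] [Module ℝ J] (jmul : J →ₗ[ℝ] J →ₗ[ℝ] J)

lemma jordan_polarized
    (hjordan : ∀ x y : J, jmul (jmul x y) (jmul x x) = jmul x (jmul y (jmul x x)))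
    (x z y : J) :
    jmul (jmul z y) (jmul x x) + jmul (jmul x y) (jmul x z) + jmul (jmul x y) (jmul z x)
      = jmul z (jmul y (jmul x x)) + jmul x (jmul y (jmul x z)) + jmul x (jmul y (jmul z x)) := by
  have hplus := hjordan (x + z) y
  have hminus := hjordan (x - z) y
  simp only [map_add, map_sub, LinearMap.add_apply, LinearMap.sub_apply] at hplus hminus
  linear_combination (norm := module) (2 : ℝ)⁻¹ • hplus - (2 : ℝ)⁻¹ • hminus - hjordan z y

lemma jordan_fully_polarized
    (hjordan : ∀ x y : J, jmul (jmul x y) (jmul x x) = jmul x (jmul y (jmul x x)))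
    (a b z y : J) :
    jmul (jmul z y) (jmul a b) + jmul (jmul z y) (jmul b a)
      + jmul (jmul a y) (jmul b z) + jmul (jmul b y) (jmul a z)
      + jmul (jmul a y) (jmul z b) + jmul (jmul b y) (jmul z a)
      = jmul z (jmul y (jmul a b)) + jmul z (jmul y (jmul b a))
      + jmul a (jmul y (jmul b z)) + jmul b (jmul y (jmul a z))
      + jmul a (jmul y (jmul z b)) + jmul b (jmul y (jmul z a)) := by
  have hsum := jordan_polarized jmul hjordan (a + b) z y
  simp only [map_add, LinearMap.add_apply] at hsum
  linear_combination (norm := module)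
    hsum - jordan_polarized jmul hjordan a z y - jordan_polarized jmul hjordan b z y

lemma jmul_jmul_jmul_eq
    (hcomm : ∀ x y : J, jmul x y = jmul y x)
    (hjordan : ∀ x y : J, jmul (jmul x y) (jmul x x) = jmul x (jmul y (jmul x x)))
    (a b w : J) :
    jmul (jmul (jmul a b) w)
      = jmul (jmul a b) ∘ₗ jmul w + jmul (jmul a w) ∘ₗ jmul b + jmul (jmul b w) ∘ₗ jmul a
        - jmul a ∘ₗ jmul w ∘ₗ jmul b - jmul b ∘ₗ jmul w ∘ₗ jmul a := by
  ext z
  simp only [LinearMap.add_apply, LinearMap.sub_apply, LinearMap.comp_apply]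
  have h := jordan_fully_polarized jmul hjordan a b z w
  rw [hcomm b a, hcomm z b, hcomm z a] at h
  rw [hcomm (jmul (jmul a b) w) z, hcomm (jmul a b) w, hcomm (jmul a b) (jmul w z), hcomm w z]
  linear_combination (norm := module) (-(2 : ℝ)⁻¹) • h

lemma tauF_smul_left (s : ℝ) (a w : J) : tauF jmul (s • a) w = s * tauF jmul a w := by
  simp only [tauF, map_smul, LinearMap.smul_apply, smul_eq_mul]

variable [FiniteDimensional ℝ J]

lemma trace_jmul_jmul_jmul_swap
    (hcomm : ∀ x y : J, jmul x y = jmul y x)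
    (hjordan : ∀ x y : J, jmul (jmul x y) (jmul x x) = jmul x (jmul y (jmul x x)))
    (a b w : J) :
    LinearMap.trace ℝ J (jmul (jmul (jmul a b) w))
      = LinearMap.trace ℝ J (jmul (jmul (jmul a w) b)) := by
  have cyc_awb : LinearMap.trace ℝ J (jmul a ∘ₗ jmul w ∘ₗ jmul b)
      = LinearMap.trace ℝ J (jmul w ∘ₗ jmul b ∘ₗ jmul a) := by
    conv_lhs => rw [← LinearMap.comp_assoc, LinearMap.trace_comp_comm',
      ← LinearMap.comp_assoc, LinearMap.trace_comp_comm']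
  have cyc_bwa : LinearMap.trace ℝ J (jmul b ∘ₗ jmul w ∘ₗ jmul a)
      = LinearMap.trace ℝ J (jmul a ∘ₗ jmul b ∘ₗ jmul w) := by
    conv_lhs => rw [← LinearMap.comp_assoc, LinearMap.trace_comp_comm']
  rw [jmul_jmul_jmul_eq jmul hcomm hjordan a b w, jmul_jmul_jmul_eq jmul hcomm hjordan a w b]
  simp only [map_add, map_sub]
  rw [hcomm b w, cyc_awb, cyc_bwa]
  ring

lemma tauF_jmul_assoc
    (hcomm : ∀ x y : J, jmul x y = jmul y x)
    (hjordan : ∀ x y : J, jmul (jmul x y) (jmul x x) = jmul x (jmul y (jmul x x)))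
    (a b w : J) :
    tauF jmul (jmul a b) w = tauF jmul a (jmul b w) := by
  unfold tauF
  rw [trace_jmul_jmul_jmul_swap jmul hcomm hjordan, hcomm a (jmul b w), hcomm b w,
    trace_jmul_jmul_jmul_swap jmul hcomm hjordan w b a, hcomm w a]

end JordanTrace

section PeirceSpace

variable {J : Type*} [AddCommGroup J] [Module ℝ J] (jmul : J →ₗ[ℝ] J →ₗ[ℝ] J)
  {r : ℕ} {c : Fin r → J} {i j : Fin r} {u : J}

lemma jmul_apply_of_mem_peirce (hu : u ∈ Peirce jmul c i j) (k : Fin r) :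
    jmul (c k) u = (((if k = i then (1 : ℝ) else 0) + (if k = j then 1 else 0)) / 2) • u := by
  simp only [Peirce, Submodule.mem_iInf, LinearMap.mem_ker, LinearMap.sub_apply,
    LinearMap.smul_apply, LinearMap.id_apply, sub_eq_zero] at hu
  exact hu k

lemma jmul_sum_smul_apply_of_mem_peirce (hu : u ∈ Peirce jmul c i j) (lam : Fin r → ℝ) :
    jmul (∑ k, lam k • c k) u = ((1 / 2) * (lam i + lam j)) • u := by
  have hterm : ∀ k, jmul (lam k • c k) u
      = ((if k = i then lam k / 2 else 0) + (if k = j then lam k / 2 else 0)) • u := by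
    intro k
    rw [map_smul, LinearMap.smul_apply, jmul_apply_of_mem_peirce jmul hu k, smul_smul]
    congr 1
    split_ifs <;> ring
  rw [map_sum, LinearMap.sum_apply, Finset.sum_congr rfl fun k _ => hterm k, ← Finset.sum_smul,
    Finset.sum_add_distrib, Finset.sum_ite_eq' Finset.univ i, Finset.sum_ite_eq' Finset.univ j]
  simp only [Finset.mem_univ, if_true]
  congr 1
  ring

end PeirceSpace

theorem stmt17_general (J : Type*) [AddCommGroup J] [Module ℝ J] [FiniteDimensional ℝ J]
    (jmul : J →ₗ[ℝ] J →ₗ[ℝ] J)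
    (hcomm : ∀ x y : J, jmul x y = jmul y x)
    (hjordan : ∀ x y : J, jmul (jmul x y) (jmul x x) = jmul x (jmul y (jmul x x)))
    (r : ℕ) (c : Fin r → J)
    (lam : Fin r → ℝ) (i j : Fin r)
    (u : J) (hu : u ∈ Peirce jmul c i j) :
    ∀ v : J,
      tauF jmul (∑ k, lam k • c k) (jmul u v) =
        (1 / 2) * (lam i + lam j) * tauF jmul u v := by
  intro v
  rw [← tauF_jmul_assoc jmul hcomm hjordan, jmul_sum_smul_apply_of_mem_peirce jmul hu,
    tauF_smul_left]

/-- for `x = Σ λ_k c_k` and `u ∈ J_{ij}`, one has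
`τ(x, u∘v) = ½ (λ_i + λ_j) τ(u, v)` for all `v`. -/
theorem stmt17 (J : Type*) [AddCommGroup J] [Module ℝ J] [FiniteDimensional ℝ J]
    (jmul : J →ₗ[ℝ] J →ₗ[ℝ] J)
    (hcomm : ∀ x y : J, jmul x y = jmul y x)
    (hjordan : ∀ x y : J, jmul (jmul x y) (jmul x x) = jmul x (jmul y (jmul x x)))
    (one : J) (hone : ∀ x : J, jmul one x = x)
    (r : ℕ) (c : Fin r → J) (hframe : IsJordanFrame jmul one c)
    (lam : Fin r → ℝ) (i j : Fin r) (hij : i ≤ j)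
    (u : J) (hu : u ∈ Peirce jmul c i j) :
    ∀ v : J,
      tauF jmul (∑ k, lam k • c k) (jmul u v) =
        (1 / 2) * (lam i + lam j) * tauF jmul u v :=
  stmt17_general J jmul hcomm hjordan r c lam i j u hu
end
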